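/- arXiv:1505.01395 — 11 statements merged into one kernel-verified Lean document; each statement's English description precedes it below -/
import Mathlib

section
/- Γₙ is the disjoint union of the sets Λ¹, Λ², …, Λⁿ, Λⁿ⁺¹; that is, every element of Γₙ lies in exactly one of these sets, and their union is Γₙ. -/
/-- A numerical semigroup: an additive submonoid of ℕ with finite complement. -/
def IsNumericalSemigroup (Γ : Set ℕ) : Prop :=
  0 ∈ Γ ∧ (∀ x ∈ Γ, ∀ y ∈ Γ, x + y ∈ Γ) ∧ Γᶜ.Finite

/-- The inductive numerical semigroups Γ₀ = ℕ, Γᵢ = aᵢ·Γ_{i-1} ∪ (aᵢbᵢ + ℕ). -/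
def IndSG (a b : ℕ → ℕ) : ℕ → Set ℕ
  | 0 => Set.univ
  | i + 1 => (fun x => a (i + 1) * x) '' IndSG a b i ∪ {x | a (i + 1) * b (i + 1) ≤ x}

/-!
By induction on `i`, `Γ_i` is the union of the blocks `{m · a_k ⋯ a_i : m ∈ D_k}` for
`1 ≤ k ≤ i`, where `D_1 = [0, b_1]` and `D_k = (a_{k-1} b_{k-1}, b_k]`, together with the tail
`(a_i b_i, ∞)`. Multiplication by `a_{i+1}` sends the blocks of `Γ_i` to those of `Γ_{i+1}`, and
the tail of `Γ_i` into the new block `a_{i+1} D_{i+1}` and the new tail; the remaining point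
`a_{i+1} b_{i+1}` is `a_{i+1}` times `b_{i+1} ≥ a_i b_i`, an element of `Γ_i`. For `i = n` the blocks
are the sets `Λᵏ`, and `Λᵏ ⊆ (b_{k-1} A_{k-1}, b_k A_k]`, where `k ↦ b_k A_k` is monotone because
`b_{k+1} ≥ a_k b_k`; hence the `Λᵏ` are disjoint.
-/

lemma prod_Icc_eq_mul_prod_Icc_succ {M : Type*} [CommMonoid M] (f : ℕ → M) {k n : ℕ}
    (hk : k ≤ n) : ∏ j ∈ Finset.Icc k n, f j = f k * ∏ j ∈ Finset.Icc (k + 1) n, f j := by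
  rw [Finset.Icc_add_one_left_eq_Ioc, Finset.mul_prod_Ioc_eq_prod_Icc hk]

lemma mem_biUnion_iff_existsUnique {ι α : Type*} {s : Set ι} {f : ι → Set α}
    (h : s.PairwiseDisjoint f) {x : α} : x ∈ ⋃ i ∈ s, f i ↔ ∃! i, i ∈ s ∧ x ∈ f i := by
  rw [Set.mem_iUnion₂]
  exact ⟨fun ⟨i, hi, hx⟩ => ⟨i, ⟨hi, hx⟩, fun j ⟨hj, hxj⟩ => h.elim_set hj hi x hxj hx⟩,
    fun ⟨i, ⟨hi, hx⟩, _⟩ => ⟨i, hi, hx⟩⟩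

lemma pairwiseDisjoint_Icc_of_monotoneOn {α : Type*} [Preorder α] {n : ℕ} {S : ℕ → Set α}
    {g : ℕ → α} (hg : MonotoneOn g (Set.Icc 1 n)) (hle : ∀ k ∈ Set.Icc 1 n, ∀ x ∈ S k, x ≤ g k)
    (hlt : ∀ k ∈ Set.Icc 1 n, ∀ x ∈ S (k + 1), g k < x) :
    (Set.Icc 1 (n + 1)).PairwiseDisjoint S := by
  have key : ∀ j ∈ Set.Icc 1 (n + 1), ∀ k ∈ Set.Icc 1 (n + 1), j < k → Disjoint (S j) (S k) := by
    rintro j ⟨hj1, -⟩ k ⟨-, hkn⟩ hjk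
    obtain ⟨k, rfl⟩ : ∃ k', k = k' + 1 := ⟨k - 1, by omega⟩
    refine Set.disjoint_left.2 fun x hxj hxk => (hlt k ⟨by omega, by omega⟩ x hxk).not_ge ?_
    calc x ≤ g j := hle j ⟨hj1, by omega⟩ x hxj
      _ ≤ g k := hg ⟨hj1, by omega⟩ ⟨by omega, by omega⟩ (by omega)
  intro j hj k hk hne
  rcases hne.lt_or_gt with h | h
  · exact key j hj k hk h
  · exact (key k hk j hj h).symm

namespace IndSG

variable {a b : ℕ → ℕ}

def digits (a b : ℕ → ℕ) (k : ℕ) : Set ℕ :=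
  if k = 1 then Set.Iic (b 1) else Set.Ioc (a (k - 1) * b (k - 1)) (b k)

/-- `block a b i k` is the set `Λᵏ` formed for `Γ_i` instead of `Γ_n`, written as the multiples
`m * (a_k ⋯ a_i)` of the admissible multipliers `m ∈ digits a b k`. -/
def block (a b : ℕ → ℕ) (i k : ℕ) : Set ℕ :=
  (· * ∏ j ∈ Finset.Icc k i, a j) '' digits a b k

def blockUnion (a b : ℕ → ℕ) (i : ℕ) : Set ℕ :=
  (⋃ k ∈ Set.Icc 1 i, block a b i k) ∪ Set.Ioi (a i * b i)

lemma block_succ {i k : ℕ} (hk : k ≤ i + 1) :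
    block a b (i + 1) k = (a (i + 1) * ·) '' block a b i k := by
  simp only [block, Set.image_image, Finset.prod_Icc_succ_top hk]
  congr 1
  funext m
  ring

lemma block_succ_self (i : ℕ) : block a b i (i + 1) = digits a b (i + 1) := by
  simp [block]

lemma image_mul_blockUnion_subset {i : ℕ} (hi : 1 ≤ i) (ha : 0 < a (i + 1)) :
    (a (i + 1) * ·) '' blockUnion a b i ⊆ blockUnion a b (i + 1) := by
  rintro _ ⟨y, hy | hy, rfl⟩
  · obtain ⟨k, ⟨hk1, hki⟩, hyk⟩ := Set.mem_iUnion₂.1 hy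
    refine Or.inl (Set.mem_biUnion (x := k) ⟨hk1, by omega⟩ ?_)
    rw [block_succ (by omega)]
    exact Set.mem_image_of_mem _ hyk
  · rcases le_or_gt y (b (i + 1)) with hyb | hyb
    · have hy' : y ∈ block a b i (i + 1) := by
        rw [block_succ_self, digits, if_neg (by omega)]
        exact ⟨hy, hyb⟩
      refine Or.inl (Set.mem_biUnion (x := i + 1) ⟨by omega, le_rfl⟩ ?_)
      rw [block_succ le_rfl]
      exact Set.mem_image_of_mem _ hy'
    · exact Or.inr (Nat.mul_lt_mul_of_pos_left hyb ha)

lemma blockUnion_succ_subset {i : ℕ} (hi : 1 ≤ i) :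
    blockUnion a b (i + 1) ⊆
      (a (i + 1) * ·) '' blockUnion a b i ∪ {x | a (i + 1) * b (i + 1) ≤ x} := by
  rintro x (hx | hx)
  · obtain ⟨k, hk, hxk⟩ := Set.mem_iUnion₂.1 hx
    rw [block_succ hk.2] at hxk
    obtain ⟨y, hy, rfl⟩ := hxk
    refine Or.inl (Set.mem_image_of_mem _ ?_)
    rcases hk.2.lt_or_eq with hki | rfl
    · exact Or.inl (Set.mem_biUnion ⟨hk.1, by omega⟩ hy)
    · rw [block_succ_self, digits, if_neg (by omega)] at hy
      exact Or.inr hy.1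
  · exact Or.inr (Set.mem_Ioi.1 hx).le

lemma eq_blockUnion_succ {i : ℕ} (hi : 1 ≤ i) (ha : 0 < a (i + 1))
    (hb : a i * b i ≤ b (i + 1)) (h : IndSG a b i = blockUnion a b i) :
    IndSG a b (i + 1) = blockUnion a b (i + 1) := by
  have hmul := image_mul_blockUnion_subset (b := b) hi ha
  have hb_mem : b (i + 1) ∈ IndSG a b i := by
    obtain ⟨i, rfl⟩ : ∃ i', i = i' + 1 := ⟨i - 1, by omega⟩
    exact Or.inr hb
  refine (Set.union_subset ?_ ?_).antisymm ((blockUnion_succ_subset hi).trans ?_)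
  · rw [h]; exact hmul
  · intro x hx
    rcases (show a (i + 1) * b (i + 1) ≤ x from hx).lt_or_eq with hlt | rfl
    · exact Or.inr hlt
    · rw [h] at hb_mem
      exact hmul (Set.mem_image_of_mem _ hb_mem)
  · rw [h]

lemma one_eq_blockUnion (ha : 0 < a 1) : IndSG a b 1 = blockUnion a b 1 := by
  ext x
  simp only [IndSG, blockUnion, block, digits, Set.Icc_self, Set.biUnion_singleton, if_pos,
    Finset.Icc_self, Finset.prod_singleton, Set.image_univ, Set.mem_union, Set.mem_range,
    Set.mem_image, Set.mem_Iic, Set.mem_Ioi, Set.mem_ofPred_eq]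
  constructor
  · rintro (⟨m, rfl⟩ | hx)
    · rcases le_or_gt m (b 1) with hm | hm
      · exact Or.inl ⟨m, hm, mul_comm _ _⟩
      · exact Or.inr (Nat.mul_lt_mul_of_pos_left hm ha)
    · rcases hx.lt_or_eq with hx | rfl
      · exact Or.inr hx
      · exact Or.inl ⟨b 1, le_rfl, mul_comm _ _⟩
  · rintro (⟨m, -, rfl⟩ | hx)
    · exact Or.inl ⟨m, mul_comm _ _⟩
    · exact Or.inr hx.le

lemma eq_blockUnion {i : ℕ} (hi : 1 ≤ i) (ha : ∀ j, 1 ≤ j → j ≤ i → 0 < a j)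
    (hb : ∀ j, 1 ≤ j → j + 1 ≤ i → a j * b j ≤ b (j + 1)) :
    IndSG a b i = blockUnion a b i := by
  induction i, hi using Nat.le_induction with
  | base => exact one_eq_blockUnion (ha 1 le_rfl le_rfl)
  | succ i hi ih =>
    exact eq_blockUnion_succ hi (ha _ (by omega) le_rfl) (hb i hi le_rfl)
      (ih (fun j hj hji => ha j hj (by omega)) (fun j hj hji => hb j hj (by omega)))

lemma monotoneOn_mul_prod {n : ℕ} (hb : ∀ j, 1 ≤ j → j + 1 ≤ n → a j * b j ≤ b (j + 1)) :
    MonotoneOn (fun k => b k * ∏ j ∈ Finset.Icc k n, a j) (Set.Icc 1 n) := by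
  refine monotoneOn_of_le_succ Set.ordConnected_Icc fun k _ hk hk' => ?_
  simp only [Order.succ_eq_add_one, Set.mem_Icc] at hk hk' ⊢
  rw [prod_Icc_eq_mul_prod_Icc_succ a hk.2, ← mul_assoc, mul_comm (b k)]
  exact Nat.mul_le_mul_right _ (hb k hk.1 hk'.2)

lemma block_subset_Iic (n k : ℕ) :
    block a b n k ⊆ Set.Iic (b k * ∏ j ∈ Finset.Icc k n, a j) := by
  rintro _ ⟨m, hm, rfl⟩
  have hmk : m ≤ b k := by
    unfold digits at hm
    split_ifs at hm with hk
    · exact hk ▸ hm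
    · exact hm.2
  exact Nat.mul_le_mul_right _ hmk

lemma block_succ_subset_Ioi {n k : ℕ} (hk : k ≠ 0) (hkn : k ≤ n)
    (hpos : 0 < ∏ j ∈ Finset.Icc (k + 1) n, a j) :
    block a b n (k + 1) ⊆ Set.Ioi (b k * ∏ j ∈ Finset.Icc k n, a j) := by
  rintro _ ⟨m, hm, rfl⟩
  rw [digits, if_neg (by omega), Nat.add_sub_cancel] at hm
  rw [Set.mem_Ioi, prod_Icc_eq_mul_prod_Icc_succ a hkn, ← mul_assoc, mul_comm (b k)]
  exact Nat.mul_lt_mul_of_pos_right hm.1 hpos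

lemma block_succ_eq {n k : ℕ} (hk : k ≠ 0) (hkn : k ≤ n) (hb : a k * b k ≤ b (k + 1)) :
    block a b n (k + 1) = {x | ∃ m, 1 ≤ m ∧ m ≤ b (k + 1) - a k * b k ∧
      x = b k * ∏ j ∈ Finset.Icc k n, a j + m * ∏ j ∈ Finset.Icc (k + 1) n, a j} := by
  ext x
  rw [block, digits, if_neg (by omega), Nat.add_sub_cancel, prod_Icc_eq_mul_prod_Icc_succ a hkn]
  constructor
  · rintro ⟨m, ⟨hm1, hm2⟩, rfl⟩
    refine ⟨m - a k * b k, by omega, by omega, ?_⟩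
    rw [← mul_assoc, mul_comm (b k), ← add_mul, Nat.add_sub_cancel' hm1.le]
  · rintro ⟨m, hm1, hm2, rfl⟩
    exact ⟨a k * b k + m, ⟨by omega, by omega⟩, by ring⟩

lemma block_one (n : ℕ) :
    block a b n 1 = {x | ∃ m, m ≤ b 1 ∧ x = m * ∏ j ∈ Finset.Icc 1 n, a j} := by
  ext x
  simp [block, digits, eq_comm]

def piece (a b : ℕ → ℕ) (n k : ℕ) : Set ℕ :=
  if k ≤ n then block a b n k else Set.Ioi (a n * b n)

lemma blockUnion_eq_biUnion_piece (n : ℕ) :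
    blockUnion a b n = ⋃ k ∈ Set.Icc 1 (n + 1), piece a b n k := by
  ext x
  simp only [blockUnion, piece, Set.mem_union, Set.mem_iUnion₂, Set.mem_Icc]
  constructor
  · rintro (⟨k, hk, hx⟩ | hx)
    · exact ⟨k, ⟨hk.1, by omega⟩, by rwa [if_pos hk.2]⟩
    · exact ⟨n + 1, ⟨by omega, le_rfl⟩, by rwa [if_neg (by omega)]⟩
  · rintro ⟨k, hk, hx⟩
    split_ifs at hx with hkn
    · exact Or.inl ⟨k, ⟨hk.1, hkn⟩, hx⟩
    · exact Or.inr hx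

lemma pairwiseDisjoint_piece {n : ℕ} (ha : ∀ j, 1 ≤ j → j ≤ n → 0 < a j)
    (hb : ∀ j, 1 ≤ j → j + 1 ≤ n → a j * b j ≤ b (j + 1)) :
    (Set.Icc 1 (n + 1)).PairwiseDisjoint (piece a b n) := by
  refine pairwiseDisjoint_Icc_of_monotoneOn (monotoneOn_mul_prod hb) ?_ ?_
  · rintro k ⟨-, hkn⟩ x hx
    rw [piece, if_pos hkn] at hx
    exact block_subset_Iic n k hx
  · rintro k ⟨hk1, hkn⟩ x hx
    rw [piece] at hx
    split_ifs at hx with hk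
    · refine block_succ_subset_Ioi (by omega) hkn (Finset.prod_pos fun j hj => ?_) hx
      rw [Finset.mem_Icc] at hj
      exact ha j (by omega) hj.2
    · obtain rfl : k = n := by omega
      simpa [mul_comm] using hx

end IndSG

theorem stmt0_general (n : ℕ) (hn : 1 ≤ n) (a b : ℕ → ℕ)
    (ha : ∀ i, 1 ≤ i → i ≤ n → 2 ≤ a i)
    (hb : ∀ i, 1 ≤ i → i + 1 ≤ n → a i * b i ≤ b (i + 1))
    (A lam : ℕ → ℕ)
    (hA : ∀ i, A i = ∏ j ∈ Finset.Icc i n, a j)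
    (hlam1 : lam 1 = b 1)
    (hlam : ∀ i, 2 ≤ i → i ≤ n → lam i = b i - a (i - 1) * b (i - 1))
    (Λ : ℕ → Set ℕ)
    (hΛ1 : Λ 1 = {x | ∃ m, m ≤ lam 1 ∧ x = m * A 1})
    (hΛk : ∀ k, 2 ≤ k → k ≤ n →
      Λ k = {x | ∃ m, 1 ≤ m ∧ m ≤ lam k ∧ x = b (k - 1) * A (k - 1) + m * A k})
    (hΛn1 : Λ (n + 1) = {x | a n * b n + 1 ≤ x}) :
    ∀ x, x ∈ IndSG a b n ↔ ∃! k, (1 ≤ k ∧ k ≤ n + 1) ∧ x ∈ Λ k := by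
  have ha' : ∀ j, 1 ≤ j → j ≤ n → 0 < a j := fun j hj hjn => by have := ha j hj hjn; omega
  have hΛ : ∀ k ∈ Set.Icc 1 (n + 1), Λ k = IndSG.piece a b n k := by
    rintro k ⟨hk1, hkn⟩
    rcases hkn.lt_or_eq with hkn | rfl
    · rw [IndSG.piece, if_pos (by omega)]
      obtain rfl | ⟨k, rfl, hk⟩ : k = 1 ∨ ∃ k', k = k' + 1 ∧ 1 ≤ k' := by
        rcases hk1.eq_or_lt with h | h
        exacts [Or.inl h.symm, Or.inr ⟨k - 1, by omega, by omega⟩]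
      · rw [hΛ1, hlam1, IndSG.block_one, hA]
      · rw [hΛk _ (by omega) (by omega), hlam _ (by omega) (by omega),
          IndSG.block_succ_eq (by omega) (by omega) (hb k hk (by omega))]
        simp only [hA, Nat.add_sub_cancel]
    · rw [hΛn1, IndSG.piece, if_neg (by omega)]
      rfl
  intro x
  rw [IndSG.eq_blockUnion hn ha' hb, IndSG.blockUnion_eq_biUnion_piece,
    mem_biUnion_iff_existsUnique (IndSG.pairwiseDisjoint_piece ha' hb)]
  exact existsUnique_congr fun k => and_congr_right fun hk => by rw [hΛ k hk]

theorem stmt0 (n : ℕ) (hn : 1 ≤ n) (a b : ℕ → ℕ)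
    (ha : ∀ i, 1 ≤ i → i ≤ n → 2 ≤ a i)
    (hb1 : 1 ≤ b 1)
    (hb : ∀ i, 1 ≤ i → i + 1 ≤ n → a i * b i ≤ b (i + 1))
    (A lam : ℕ → ℕ)
    (hA : ∀ i, A i = ∏ j ∈ Finset.Icc i n, a j)
    (hlam1 : lam 1 = b 1)
    (hlam : ∀ i, 2 ≤ i → i ≤ n → lam i = b i - a (i - 1) * b (i - 1))
    (Λ : ℕ → Set ℕ)
    (hΛ1 : Λ 1 = {x | ∃ m, m ≤ lam 1 ∧ x = m * A 1})
    (hΛk : ∀ k, 2 ≤ k → k ≤ n →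
      Λ k = {x | ∃ m, 1 ≤ m ∧ m ≤ lam k ∧ x = b (k - 1) * A (k - 1) + m * A k})
    (hΛn1 : Λ (n + 1) = {x | a n * b n + 1 ≤ x}) :
    ∀ x, x ∈ IndSG a b n ↔ ∃! k, (1 ≤ k ∧ k ≤ n + 1) ∧ x ∈ Λ k :=
  stmt0_general n hn a b ha hb A lam hA hlam1 hlam Λ hΛ1 hΛk hΛn1
end

section
/- Let Γ be a numerical semigroup with elements listed in increasing order ρ₁ = 0 < ρ₂ < ρ₃ < ⋯, and set δᵢ = ρ_{i+1} − ρᵢ for i ≥ 1. Then Γ is inductive if and only if δ_{i+1} divides δᵢ for every i ≥ 1. -/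
/-- A numerical semigroup is inductive if it is Γₙ for some admissible data
(`n = 0` is allowed, so ℕ itself is inductive). -/
def IsInductive (Γ : Set ℕ) : Prop :=
  ∃ n, ∃ a b : ℕ → ℕ, (∀ i, 1 ≤ i → i ≤ n → 2 ≤ a i) ∧ (1 ≤ n → 1 ≤ b 1) ∧
    (∀ i, 1 ≤ i → i + 1 ≤ n → a i * b i ≤ b (i + 1)) ∧ Γ = IndSG a b n


/-!
Enumerate a semigroup increasingly by `ρ`. If `ρ` enumerates `Γ` and `ρ j = b`, then
`aΓ ∪ (ab + ℕ)` is enumerated by `a ρ 0, …, a ρ j, ab + 1, ab + 2, …`: the first `j` gaps are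
multiplied by `a` and all later gaps are `1`. Hence the inductive construction preserves the
divisibility of consecutive gaps. Conversely, if the gaps divide each other, let `j` be the last
index with `g = δ_j ≥ 2`. Then `g` divides all earlier gaps, hence `ρ 0, …, ρ (j + 1)`, and `Γ`
is obtained by the inductive step with `a = g`, `b = ρ (j + 1) / g` from the semigroup enumerated
by `ρ 0 / g, …, ρ (j + 1) / g` followed by consecutive integers. The latter has dividing gaps and
its gaps are `1` from index `j` on, so induction on `j` applies.
-/

open Function Set

def gap (ρ : ℕ → ℕ) (i : ℕ) : ℕ := ρ (i + 1) - ρ i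

def GapsDvd (ρ : ℕ → ℕ) : Prop := ∀ i, gap ρ (i + 1) ∣ gap ρ i

def IsAdmissible (n : ℕ) (a b : ℕ → ℕ) : Prop :=
  (∀ i, 1 ≤ i → i ≤ n → 2 ≤ a i) ∧ (1 ≤ n → 1 ≤ b 1) ∧
    (∀ i, 1 ≤ i → i + 1 ≤ n → a i * b i ≤ b (i + 1))

section IndSG

variable {n c d : ℕ} {a b : ℕ → ℕ}

lemma IsAdmissible.of_succ (h : IsAdmissible (n + 1) a b) : IsAdmissible n a b :=
  ⟨fun i h₁ h₂ => h.1 i h₁ (by omega), fun hn => h.2.1 (by omega),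
    fun i h₁ h₂ => h.2.2 i h₁ (by omega)⟩

lemma IsAdmissible.update (h : IsAdmissible n a b) (hc : 2 ≤ c) (hd : 1 ≤ d)
    (hnd : 1 ≤ n → a n * b n ≤ d) :
    IsAdmissible (n + 1) (update a (n + 1) c) (update b (n + 1) d) := by
  refine ⟨fun i h₁ h₂ => ?_, fun _ => ?_, fun i h₁ h₂ => ?_⟩
  · rcases eq_or_lt_of_le h₂ with rfl | hlt
    · simpa using hc
    · simpa [update_of_ne (show i ≠ n + 1 by omega)] using h.1 i h₁ (by omega)
  · rcases Nat.eq_zero_or_pos n with rfl | hn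
    · simpa using hd
    · simpa [update_of_ne (show 1 ≠ n + 1 by omega)] using h.2.1 hn
  · rw [update_of_ne (show i ≠ n + 1 by omega), update_of_ne (show i ≠ n + 1 by omega)]
    rcases eq_or_lt_of_le h₂ with hi | hlt
    · obtain rfl : i = n := by omega
      simpa using hnd h₁
    · simpa [update_of_ne (show i + 1 ≠ n + 1 by omega)] using h.2.2 i h₁ (by omega)

lemma IndSG_congr {a' b' : ℕ → ℕ} (ha : ∀ i ≤ n, a i = a' i) (hb : ∀ i ≤ n, b i = b' i) :
    IndSG a b n = IndSG a' b' n := by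
  induction n with
  | zero => rfl
  | succ n ih =>
    simp only [IndSG, ha (n + 1) le_rfl, hb (n + 1) le_rfl,
      ih (fun i hi => ha i (by omega)) (fun i hi => hb i (by omega))]

lemma IndSG_update_succ :
    IndSG (update a (n + 1) c) (update b (n + 1) d) (n + 1) =
      (c * ·) '' IndSG a b n ∪ {x | c * d ≤ x} := by
  simp only [IndSG, update_self]
  rw [IndSG_congr (fun i hi => update_of_ne (by omega) _ _)
    (fun i hi => update_of_ne (by omega) _ _)]

lemma IsAdmissible.mem_IndSG (h : IsAdmissible (n + 1) a b) : b (n + 1) ∈ IndSG a b n := by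
  cases n with
  | zero => trivial
  | succ n => exact Or.inr (h.2.2 (n + 1) (by omega) le_rfl)

end IndSG

section Enumeration

variable {ρ : ℕ → ℕ} {a i j k : ℕ}

-- If `ρ` enumerates `Γ` and `ρ j = b`, then `stepSeq ρ a j` enumerates `aΓ ∪ (ab + ℕ)`.
def stepSeq (ρ : ℕ → ℕ) (a j : ℕ) (i : ℕ) : ℕ :=
  if i ≤ j then a * ρ i else a * ρ j + (i - j)

lemma stepSeq_of_le (h : i ≤ j) : stepSeq ρ a j i = a * ρ i := if_pos h

lemma stepSeq_add : stepSeq ρ a j (j + k) = a * ρ j + k := by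
  unfold stepSeq
  split_ifs with h
  · obtain rfl : k = 0 := by omega
    rfl
  · omega

lemma stepSeq_strictMono (hρ : StrictMonoOn ρ (Iic j)) (ha : 0 < a) :
    StrictMono (stepSeq ρ a j) := by
  intro i i' hii'
  have hρj : ∀ m ≤ j, a * ρ m ≤ a * ρ j := fun m hm =>
    Nat.mul_le_mul_left a (hρ.monotoneOn hm (mem_Iic.2 le_rfl) hm)
  unfold stepSeq
  split_ifs with h h' h'
  · exact Nat.mul_lt_mul_of_pos_left (hρ h (mem_Iic.2 h') hii') ha
  · have := hρj i h; omega
  · omega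
  · omega

lemma gap_stepSeq : gap (stepSeq ρ a j) i = if i < j then a * gap ρ i else 1 := by
  unfold gap
  split_ifs with h
  · rw [stepSeq_of_le h.le, stepSeq_of_le h, Nat.mul_sub]
  · obtain ⟨k, rfl⟩ := Nat.exists_eq_add_of_le (not_lt.1 h)
    rw [add_assoc, stepSeq_add, stepSeq_add]
    omega

lemma range_stepSeq (hρ : Monotone ρ) :
    range (stepSeq ρ a j) = (a * ·) '' range ρ ∪ {x | a * ρ j ≤ x} := by
  have htail : ∀ x, a * ρ j ≤ x → x ∈ range (stepSeq ρ a j) := fun x hx =>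
    ⟨j + (x - a * ρ j), by rw [stepSeq_add]; omega⟩
  ext x
  constructor
  · rintro ⟨m, rfl⟩
    by_cases hm : m ≤ j
    · exact Or.inl ⟨ρ m, mem_range_self m, (stepSeq_of_le hm).symm⟩
    · right
      unfold stepSeq
      simp only [if_neg hm, mem_ofPred_eq]
      omega
  · rintro (⟨_, ⟨m, rfl⟩, rfl⟩ | hx)
    · by_cases hm : m ≤ j
      · exact ⟨m, stepSeq_of_le hm⟩
      · exact htail _ (Nat.mul_le_mul_left a (hρ (by omega)))
    · exact htail x hx

lemma stepSeq_gapsDvd (h : ∀ i, i + 1 < j → gap ρ (i + 1) ∣ gap ρ i) :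
    GapsDvd (stepSeq ρ a j) := by
  intro i
  rw [gap_stepSeq, gap_stepSeq]
  split_ifs with h₁
  · exact mul_dvd_mul_left a (h i h₁)
  · omega
  all_goals exact one_dvd _

end Enumeration

lemma exists_enum_IndSG {n : ℕ} {a b : ℕ → ℕ} (h : IsAdmissible n a b) :
    ∃ ρ, StrictMono ρ ∧ range ρ = IndSG a b n ∧ GapsDvd ρ := by
  induction n with
  | zero => exact ⟨id, strictMono_id, range_id, fun _ => by simp [gap]⟩
  | succ n ih =>
    obtain ⟨ρ, hρ, hrange, hdvd⟩ := ih h.of_succ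
    obtain ⟨j, hj⟩ : b (n + 1) ∈ range ρ := hrange ▸ h.mem_IndSG
    refine ⟨stepSeq ρ (a (n + 1)) j,
      stepSeq_strictMono (hρ.strictMonoOn _) (by have := h.1 (n + 1) (by omega) le_rfl; omega),
      ?_, stepSeq_gapsDvd fun i _ => hdvd i⟩
    rw [range_stepSeq hρ.monotone, hrange, hj]
    rfl

section Division

variable {ρ : ℕ → ℕ} {d i j k : ℕ}

lemma GapsDvd.gap_dvd_of_le (h : GapsDvd ρ) (hij : i ≤ j) : gap ρ j ∣ gap ρ i := by
  induction j, hij using Nat.le_induction with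
  | base => exact dvd_rfl
  | succ j _ ih => exact (h j).trans ih

lemma dvd_apply_of_dvd_gap (h0 : ρ 0 = 0) (hρ : Monotone ρ) (h : ∀ i < k, d ∣ gap ρ i) :
    ∀ i ≤ k, d ∣ ρ i := by
  intro i hi
  induction i with
  | zero => simp [h0]
  | succ i ih =>
    rw [← Nat.add_sub_cancel' (hρ (Nat.le_succ i))]
    exact dvd_add (ih (by omega)) (h i hi)

lemma apply_add_of_gap_eq_one (h : ∀ i, j ≤ i → gap ρ i = 1) : ρ (j + k) = ρ j + k := by
  induction k with
  | zero => rfl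
  | succ k ih =>
    have := h (j + k) (by omega)
    unfold gap at this
    rw [← add_assoc]
    omega

lemma gap_div (hi : d ∣ ρ i) (hi' : d ∣ ρ (i + 1)) : gap (ρ · / d) i = gap ρ i / d := by
  rcases Nat.eq_zero_or_pos d with rfl | hd
  · simp [gap]
  obtain ⟨u, hu⟩ := hi
  obtain ⟨v, hv⟩ := hi'
  simp only [gap, hu, hv, ← Nat.mul_sub, Nat.mul_div_cancel_left _ hd]

-- The semigroup `Γ'` with `Γ = gΓ' ∪ (ρ (j + 1) + ℕ)`, where `g = gap ρ j`.
def quotSeq (ρ : ℕ → ℕ) (j : ℕ) : ℕ → ℕ := stepSeq (ρ · / gap ρ j) 1 (j + 1)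

lemma quotSeq_zero (h0 : ρ 0 = 0) : quotSeq ρ j 0 = 0 := by
  simp [quotSeq, stepSeq_of_le (Nat.zero_le _), h0]

variable (h0 : ρ 0 = 0) (hρ : StrictMono ρ) (hdvd : GapsDvd ρ)
include h0 hρ hdvd

lemma gap_dvd_apply : ∀ i ≤ j + 1, gap ρ j ∣ ρ i :=
  dvd_apply_of_dvd_gap h0 hρ.monotone fun _ hi => hdvd.gap_dvd_of_le (by omega)

lemma quotSeq_strictMono : StrictMono (quotSeq ρ j) :=
  stepSeq_strictMono (fun _ _ _ hi hii' =>
    Nat.div_lt_div_of_lt_of_dvd (gap_dvd_apply h0 hρ hdvd _ (mem_Iic.1 hi)) (hρ hii')) one_pos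

lemma gap_quotSeq : gap (quotSeq ρ j) i = if i ≤ j then gap ρ i / gap ρ j else 1 := by
  rw [quotSeq, gap_stepSeq]
  split_ifs
  · rw [one_mul, gap_div (gap_dvd_apply h0 hρ hdvd _ (by omega))
      (gap_dvd_apply h0 hρ hdvd _ (by omega))]
  all_goals omega

lemma quotSeq_gapsDvd : GapsDvd (quotSeq ρ j) := by
  intro i
  rw [gap_quotSeq h0 hρ hdvd, gap_quotSeq h0 hρ hdvd]
  split_ifs with h₁
  · exact Nat.div_dvd_div (hdvd.gap_dvd_of_le h₁) (hdvd i)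
  · omega
  all_goals exact one_dvd _

lemma gap_quotSeq_eq_one : ∀ i, j ≤ i → gap (quotSeq ρ j) i = 1 := by
  intro i hi
  rw [gap_quotSeq h0 hρ hdvd]
  split_ifs with h
  · obtain rfl : i = j := by omega
    exact Nat.div_self (Nat.sub_pos_of_lt (hρ (Nat.lt_succ_self i)))
  · rfl

lemma stepSeq_quotSeq (hone : ∀ i, j + 1 ≤ i → gap ρ i = 1) :
    stepSeq (quotSeq ρ j) (gap ρ j) (j + 1) = ρ := by
  have hdiv : ∀ i ≤ j + 1, gap ρ j * quotSeq ρ j i = ρ i := fun i hi => by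
    rw [quotSeq, stepSeq_of_le hi, one_mul, Nat.mul_div_cancel' (gap_dvd_apply h0 hρ hdvd i hi)]
  funext i
  by_cases hi : i ≤ j + 1
  · rw [stepSeq_of_le hi, hdiv i hi]
  · obtain ⟨k, rfl⟩ := Nat.exists_eq_add_of_le (not_le.1 hi).le
    rw [stepSeq_add, hdiv _ le_rfl, apply_add_of_gap_eq_one hone]

end Division

-- The bound on `a n * b n` keeps the next inductive step admissible.
lemma exists_IndSG_of_gapsDvd {ρ : ℕ → ℕ} {j : ℕ} (h0 : ρ 0 = 0) (hρ : StrictMono ρ)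
    (hdvd : GapsDvd ρ) (hone : ∀ i, j ≤ i → gap ρ i = 1) :
    ∃ n a b, IsAdmissible n a b ∧ range ρ = IndSG a b n ∧ (1 ≤ n → a n * b n ≤ ρ j) := by
  induction j generalizing ρ with
  | zero =>
    have hid : ρ = id := funext fun i => by
      simpa [h0] using apply_add_of_gap_eq_one (j := 0) (k := i) fun i _ => hone i (Nat.zero_le i)
    refine ⟨0, 0, 0, ⟨by omega, by omega, by omega⟩, by rw [hid, range_id]; rfl, by omega⟩
  | succ j ih =>
    by_cases hj : gap ρ j = 1
    · obtain ⟨n, a, b, hadm, hrange, hbound⟩ :=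
        ih h0 hρ hdvd fun i hi => (eq_or_lt_of_le hi).elim (· ▸ hj) (hone i)
      exact ⟨n, a, b, hadm, hrange, fun hn => (hbound hn).trans (hρ (Nat.lt_succ_self j)).le⟩
    have hg : 2 ≤ gap ρ j := by
      have := hρ (Nat.lt_add_one j); unfold gap at hj ⊢; omega
    have hρ' : StrictMono (quotSeq ρ j) := quotSeq_strictMono h0 hρ hdvd
    obtain ⟨n, a, b, hadm, hrange, hbound⟩ := ih (quotSeq_zero h0) hρ'
      (quotSeq_gapsDvd h0 hρ hdvd) (gap_quotSeq_eq_one h0 hρ hdvd)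
    have hstep := stepSeq_quotSeq h0 hρ hdvd hone
    refine ⟨n + 1, update a (n + 1) (gap ρ j), update b (n + 1) (quotSeq ρ j (j + 1)),
      hadm.update hg ?_ fun hn => (hbound hn).trans (hρ' (Nat.lt_succ_self j)).le, ?_, ?_⟩
    · have := hρ' (show 0 < j + 1 by omega); rw [quotSeq_zero h0] at this; omega
    · rw [IndSG_update_succ, ← hrange, ← range_stepSeq hρ'.monotone, hstep]
    · intro _
      simp only [update_self]
      rw [← stepSeq_of_le le_rfl, hstep]

lemma gap_eq_one_of_Ici_subset {ρ : ℕ → ℕ} {N : ℕ} (hρ : StrictMono ρ)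
    (hN : Ici N ⊆ range ρ) : ∀ i, N ≤ i → gap ρ i = 1 := by
  intro i hi
  obtain ⟨m, hm⟩ := hN (mem_Ici.2 (by have := hρ.le_apply (x := i); omega) : ρ i + 1 ∈ Ici N)
  have hlt : i < m := hρ.lt_iff_lt.1 (by omega)
  have := hρ.monotone (show i + 1 ≤ m by omega)
  have := hρ (Nat.lt_add_one i)
  unfold gap
  omega

/-- Here `ρ` enumerates Γ in increasing order, starting with `ρ 0 = ρ₁ = 0`;
`δᵢ = ρ_{i+1} - ρᵢ` for `i ≥ 1` becomes `ρ (i+1) - ρ i` for `i ≥ 0`. -/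
theorem stmt1 (Γ : Set ℕ) (hΓ : IsNumericalSemigroup Γ)
    (ρ : ℕ → ℕ) (hρmono : StrictMono ρ) (hρrange : Set.range ρ = Γ) :
    IsInductive Γ ↔ ∀ i, (ρ (i + 2) - ρ (i + 1)) ∣ (ρ (i + 1) - ρ i) := by
  constructor
  · rintro ⟨n, a, b, ha, hb, hab, rfl⟩
    obtain ⟨ρ', hρ', hrange, hdvd⟩ := exists_enum_IndSG ⟨ha, hb, hab⟩
    obtain rfl := (hρmono.range_inj hρ').1 (hρrange.trans hrange.symm)
    exact hdvd
  · intro hdvd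
    obtain ⟨m, hm⟩ : 0 ∈ range ρ := hρrange ▸ hΓ.1
    have h0 : ρ 0 = 0 := by have := hρmono.monotone (Nat.zero_le m); omega
    obtain ⟨N, hN⟩ := hΓ.2.2.bddAbove
    have hIci : Ici (N + 1) ⊆ range ρ := fun x hx => hρrange ▸ by
      by_contra hc; have := hN hc; simp only [mem_Ici] at hx; omega
    obtain ⟨n, a, b, ⟨ha, hb, hab⟩, hrange, -⟩ := exists_IndSG_of_gapsDvd h0 hρmono hdvd
      (gap_eq_one_of_Ici_subset hρmono hIci)
    exact ⟨n, a, b, ha, hb, hab, hρrange ▸ hrange⟩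
end

section
/- For every j ∈ {1, …, aₙ−1} and every k ∈ {0, …, A₁/aₙ − 1}, the Apéry sets satisfy #S_{kaₙ+j} = #S_{kaₙ+1} + (j−1). -/
/-- The Apéry set Ap(Γ,x) = {s ∈ Γ : s - x ∉ Γ}. -/
def Ap (Γ : Set ℕ) (x : ℕ) : Set ℕ := {s ∈ Γ | ∀ t ∈ Γ, s ≠ t + x}

open Set

lemma Ap_eq_diff_image (Γ : Set ℕ) (x : ℕ) : Ap Γ x = Γ \ (· + x) '' Γ := by
  ext s
  simp [Ap, eq_comm]

lemma ncard_inter_Iio_add_ncard_compl {Γ : Set ℕ} {M : ℕ} (h : Γᶜ ⊆ Iio M) :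
    (Γ ∩ Iio M).ncard + Γᶜ.ncard = M := by
  have hfin : Γᶜ.Finite := (finite_Iio M).subset h
  rw [← ncard_union_eq (disjoint_compl_right.mono_left inter_subset_left) (toFinite _) hfin,
    ← ncard_Iio_nat M]
  congr 1
  ext s
  by_cases hs : s ∈ Γ
  · simp [hs]
  · simpa [hs] using h hs

theorem ncard_Ap_eq {Γ : Set ℕ} (hΓ : Γᶜ.Finite) (x : ℕ) :
    (Ap Γ x).ncard = x + {t ∈ Γ | t + x ∉ Γ}.ncard := by
  obtain ⟨u, hu⟩ := hΓ.bddAbove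
  have hM : Γᶜ ⊆ Iio (u + 1) := fun s hs => Nat.lt_succ_of_le (hu hs)
  set M := u + 1
  set P := Γ ∩ Iio (M + x)
  set Q := (· + x) '' (Γ ∩ Iio M)
  have hPQ : P.ncard = Q.ncard + x := by
    have hP : P.ncard + Γᶜ.ncard = M + x :=
      ncard_inter_Iio_add_ncard_compl (hM.trans (Iio_subset_Iio (M.le_add_right x)))
    have hQ : (Γ ∩ Iio M).ncard + Γᶜ.ncard = M := ncard_inter_Iio_add_ncard_compl hM
    rw [ncard_image_of_injective _ (add_left_injective x)]
    omega
  have hAp : Ap Γ x = P \ Q := by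
    rw [Ap_eq_diff_image]
    ext s
    simp only [P, Q, mem_sdiff, mem_inter_iff, mem_image, mem_Iio]
    constructor
    · rintro ⟨hs, hnot⟩
      refine ⟨⟨hs, ?_⟩, fun ⟨t, ⟨ht, _⟩, hts⟩ => hnot ⟨t, ht, hts⟩⟩
      by_contra! hle
      exact hnot ⟨s - x, by_contra fun h => absurd (mem_Iio.mp (hM h)) (by omega), by omega⟩
    · rintro ⟨⟨hs, _⟩, hnot⟩
      refine ⟨hs, fun ⟨t, ht, hts⟩ => hnot ⟨t, ⟨ht, by omega⟩, hts⟩⟩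
  have hexit : (· + x) '' {t ∈ Γ | t + x ∉ Γ} = Q \ P := by
    ext s
    simp only [P, Q, mem_sdiff, mem_inter_iff, mem_image, mem_ofPred_eq, mem_Iio]
    constructor
    · rintro ⟨t, ⟨ht, htx⟩, rfl⟩
      have : t + x < M := hM htx
      exact ⟨⟨t, ⟨ht, by omega⟩, rfl⟩, fun h => htx h.1⟩
    · rintro ⟨⟨t, ⟨ht, htM⟩, rfl⟩, hnot⟩
      exact ⟨t, ⟨ht, fun h => hnot ⟨h, by omega⟩⟩, rfl⟩
  rw [hAp, ← ncard_image_of_injective {t ∈ Γ | t + x ∉ Γ} (add_left_injective x), hexit]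
  have h1 := ncard_inter_add_ncard_sdiff_eq_ncard P Q
  have h2 := ncard_inter_add_ncard_sdiff_eq_ncard Q P
  rw [inter_comm] at h2
  omega

section IndSG

variable {a b : ℕ → ℕ} {m : ℕ}

lemma mem_IndSG_succ {y : ℕ} :
    y ∈ IndSG a b (m + 1) ↔ (∃ s ∈ IndSG a b m, a (m + 1) * s = y) ∨ a (m + 1) * b (m + 1) ≤ y :=
  Iff.rfl

lemma compl_IndSG_finite (n : ℕ) : (IndSG a b n)ᶜ.Finite := by
  cases n with
  | zero => simp [IndSG]
  | succ m =>
    refine (finite_Iio (a (m + 1) * b (m + 1))).subset fun y hy => ?_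
    simp only [mem_compl_iff, mem_IndSG_succ, not_or, not_le] at hy
    exact hy.2

lemma mul_add_mem_IndSG_succ_iff {q r : ℕ} (hr : 0 < r) (hra : r < a (m + 1)) :
    a (m + 1) * q + r ∈ IndSG a b (m + 1) ↔ b (m + 1) ≤ q := by
  have hmod : (a (m + 1) * q + r) % a (m + 1) = r := by
    rw [Nat.mul_add_mod, Nat.mod_eq_of_lt hra]
  rw [mem_IndSG_succ]
  constructor
  · rintro (⟨s, -, hs⟩ | h)
    · rw [← hs, Nat.mul_mod_right] at hmod
      omega
    · by_contra! hq
      have : a (m + 1) * (q + 1) ≤ a (m + 1) * b (m + 1) := Nat.mul_le_mul_left _ hq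
      rw [Nat.mul_succ] at this
      omega
  · exact fun hq => Or.inr ((Nat.mul_le_mul_left _ hq).trans (Nat.le_add_right _ _))

theorem setOf_add_notMem_IndSG_succ {j k : ℕ} (hj : 0 < j) (hja : j < a (m + 1)) :
    {t ∈ IndSG a b (m + 1) | t + (k * a (m + 1) + j) ∉ IndSG a b (m + 1)} =
      (a (m + 1) * ·) '' {s ∈ IndSG a b m | s + k < b (m + 1)} := by
  ext t
  simp only [mem_ofPred_eq, mem_image]
  have hshift (s : ℕ) : a (m + 1) * s + (k * a (m + 1) + j) = a (m + 1) * (s + k) + j := by ring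
  constructor
  · rintro ⟨ht, hx⟩
    rcases mem_IndSG_succ.mp ht with ⟨s, hs, rfl⟩ | hge
    · rw [hshift, mul_add_mem_IndSG_succ_iff hj hja] at hx
      exact ⟨s, ⟨hs, by omega⟩, rfl⟩
    · exact absurd (mem_IndSG_succ.mpr (Or.inr (by omega))) hx
  · rintro ⟨s, ⟨hs, hsk⟩, rfl⟩
    refine ⟨mem_IndSG_succ.mpr (Or.inl ⟨s, hs, rfl⟩), ?_⟩
    rw [hshift, mul_add_mem_IndSG_succ_iff hj hja]
    omega

end IndSG

theorem stmt2_general (n : ℕ) (a b : ℕ → ℕ)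
    (j k : ℕ) (hj1 : 1 ≤ j) (hj2 : j ≤ a n - 1) :
    (Ap (IndSG a b n) (k * a n + j)).ncard
      = (Ap (IndSG a b n) (k * a n + 1)).ncard + (j - 1) := by
  have hexits : {t ∈ IndSG a b n | t + (k * a n + j) ∉ IndSG a b n} =
      {t ∈ IndSG a b n | t + (k * a n + 1) ∉ IndSG a b n} := by
    cases n with
    | zero => simp [IndSG]
    | succ m =>
      rw [setOf_add_notMem_IndSG_succ hj1 (by omega),
        setOf_add_notMem_IndSG_succ Nat.one_pos (by omega)]
  rw [ncard_Ap_eq (compl_IndSG_finite n), ncard_Ap_eq (compl_IndSG_finite n), hexits]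
  omega

/-- `∏ i in Icc 1 (n-1), a i` is `A₁ / aₙ`. -/
theorem stmt2 (n : ℕ) (hn : 1 ≤ n) (a b : ℕ → ℕ)
    (ha : ∀ i, 1 ≤ i → i ≤ n → 2 ≤ a i)
    (hb1 : 1 ≤ b 1)
    (hb : ∀ i, 1 ≤ i → i + 1 ≤ n → a i * b i ≤ b (i + 1))
    (j k : ℕ) (hj1 : 1 ≤ j) (hj2 : j ≤ a n - 1)
    (hk : k ≤ (∏ i ∈ Finset.Icc 1 (n - 1), a i) - 1) :
    (Ap (IndSG a b n) (k * a n + j)).ncard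
      = (Ap (IndSG a b n) (k * a n + 1)).ncard + (j - 1) :=
  stmt2_general n a b j k hj1 hj2
end

section
/- Let Γ be a numerical semigroup with conductor c, let a ≥ 2 and b ≥ c be integers, and set Γ' = a·Γ ∪ (ab + ℕ). Then for every integer t ≥ 1: Ap(Γ', at) = a·Ap(Γ, t) ∪ ({ab, ab+1, …, ab+at−1} ∖ {ab, ab+a, ab+2a, …, ab+(t−1)a}), and this union is disjoint. In particular, #Ap(Γ', at) = #Ap(Γ, t) + (a−1)t. -/
/-- `c` is the conductor of `Γ`: the least nonnegative integer with `c + ℕ ⊆ Γ`. -/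
def IsConductor (Γ : Set ℕ) (c : ℕ) : Prop :=
  (∀ m, c ≤ m → m ∈ Γ) ∧ ∀ c', (∀ m, c' ≤ m → m ∈ Γ) → c ≤ c'

theorem stmt4 (Γ : Set ℕ) (hΓ : IsNumericalSemigroup Γ)
    (c : ℕ) (hc : IsConductor Γ c)
    (a b : ℕ) (ha : 2 ≤ a) (hb : c ≤ b)
    (Γ' : Set ℕ) (hΓ' : Γ' = (fun x => a * x) '' Γ ∪ {x | a * b ≤ x})
    (t : ℕ) (ht : 1 ≤ t) :
    Ap Γ' (a * t)
      = (fun x => a * x) '' Ap Γ t ∪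
        ({x | a * b ≤ x ∧ x < a * b + a * t} \ {x | ∃ m, m < t ∧ x = a * b + m * a})
    ∧ Disjoint ((fun x => a * x) '' Ap Γ t)
        ({x | a * b ≤ x ∧ x < a * b + a * t} \ {x | ∃ m, m < t ∧ x = a * b + m * a})
    ∧ (Ap Γ' (a * t)).ncard = (Ap Γ t).ncard + (a - 1) * t := by
  obtain ⟨h0, hadd, hfin⟩ := hΓ
  have ha0 : 0 < a := by omega
  have hcm : ∀ m, b ≤ m → m ∈ Γ := fun m hm => hc.1 m (le_trans hb hm)
  have hinj : Function.Injective (fun x => a * x) :=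
    fun x y h => Nat.eq_of_mul_eq_mul_left ha0 h
  set S1 := (fun x => a * x) '' Ap Γ t with hS1
  set S2 := ({x | a * b ≤ x ∧ x < a * b + a * t} \ {x | ∃ m, m < t ∧ x = a * b + m * a})
    with hS2
  -- the set equality
  have hEq : Ap Γ' (a * t) = S1 ∪ S2 := by
    ext s
    constructor
    · rintro ⟨hs, hap⟩
      rw [hΓ'] at hs
      by_cases hlt2 : s < a * b + a * t
      · by_cases hm : ∃ m, m < t ∧ s = a * b + m * a
        · obtain ⟨m, hm1, rfl⟩ := hm
          left
          refine ⟨b + m, ⟨hcm _ (by omega), ?_⟩, by ring⟩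
          intro u hu heq
          apply hap (a * u) (by rw [hΓ']; exact Or.inl ⟨u, hu, rfl⟩)
          rw [show a * b + m * a = a * (b + m) by ring, heq]; ring
        · rcases hs with ⟨x, hx, rfl⟩ | hge
          · by_cases hxb : x < b
            · left
              refine ⟨x, ⟨hx, ?_⟩, rfl⟩
              intro u hu heq
              exact hap (a * u) (by rw [hΓ']; exact Or.inl ⟨u, hu, rfl⟩)
                (by rw [heq]; ring)
            · -- x ≥ b, so a*x ≥ a*b; it's in the interval, in S2
              push_neg at hxb
              right
              refine ⟨⟨Nat.mul_le_mul_left a hxb, hlt2⟩, hm⟩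
          · right
            exact ⟨⟨hge, hlt2⟩, hm⟩
      · exfalso
        push_neg at hlt2
        have h1 : a * b ≤ s - a * t := by omega
        exact hap (s - a * t) (by rw [hΓ']; exact Or.inr h1) (by omega)
    · rintro (⟨x, ⟨hx, hxap⟩, rfl⟩ | ⟨⟨h1, h2⟩, hnm⟩)
      · refine ⟨by rw [hΓ']; exact Or.inl ⟨x, hx, rfl⟩, ?_⟩
        intro u hu heq
        rw [hΓ'] at hu
        rcases hu with ⟨y, hy, rfl⟩ | hge
        · refine hxap y hy (Nat.eq_of_mul_eq_mul_left ha0 ?_)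
          rw [Nat.mul_add]; exact heq
        · have heq2 : a * x = u + a * t := heq
          have hge' : a * b ≤ u := hge
          have hxt : b + t ≤ x := by
            have h3 : a * (b + t) ≤ a * x := by
              rw [Nat.mul_add]; omega
            exact Nat.le_of_mul_le_mul_left h3 ha0
          exact hxap (x - t) (hcm _ (by omega)) (by omega)
      · refine ⟨by rw [hΓ']; exact Or.inr h1, ?_⟩
        intro u hu heq
        rw [hΓ'] at hu
        rcases hu with ⟨y, hy, rfl⟩ | hge
        · apply hnm
          have hs' : s = a * (y + t) := by rw [Nat.mul_add]; exact heq
          have hby : b ≤ y + t := by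
            refine Nat.le_of_mul_le_mul_left ?_ ha0
            rw [← hs']; omega
          have hyb : y + t < b + t := by
            refine Nat.lt_of_mul_lt_mul_left (a := a) ?_
            rw [← hs', Nat.mul_add a b t]; omega
          refine ⟨y + t - b, by omega, ?_⟩
          rw [hs', show a * b + (y + t - b) * a = a * (b + (y + t - b)) by ring,
            show b + (y + t - b) = y + t by omega]
        · have hge' : a * b ≤ u := hge
          omega
  have hdisj : Disjoint S1 S2 := by
    rw [Set.disjoint_left]
    rintro s ⟨x, hxap, rfl⟩ ⟨⟨h1, h2⟩, hnm⟩
    apply hnm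
    have h1' : a * b ≤ a * x := h1
    have h2' : a * x < a * b + a * t := h2
    have hbx : b ≤ x := Nat.le_of_mul_le_mul_left h1' ha0
    have hxbt : x < b + t := by
      refine Nat.lt_of_mul_lt_mul_left (a := a) ?_
      rw [Nat.mul_add a b t]; omega
    exact ⟨x - b, by omega, by rw [show a * b + (x - b) * a = a * (b + (x - b)) by ring,
      show b + (x - b) = x by omega]⟩
  -- finiteness of Ap Γ t
  have hApfin : (Ap Γ t).Finite := by
    refine (Set.finite_Iio (c + t)).subset ?_
    rintro s ⟨hs, hap⟩
    by_contra hlt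
    simp only [Set.mem_Iio, not_lt] at hlt
    exact hap (s - t) (hc.1 _ (by omega)) (by omega)
  have hS1fin : S1.Finite := hApfin.image _
  -- S2 as a finset
  have hS2eq : S2 = ↑(Finset.Ico (a * b) (a * b + a * t) \
      (Finset.range t).image (fun m => a * b + m * a)) := by
    ext s
    simp only [hS2, Finset.coe_sdiff, Set.mem_diff, Set.mem_setOf_eq, Finset.coe_Ico,
      Set.mem_Ico, Finset.coe_image, Finset.coe_range, Set.mem_image, Set.mem_Iio]
    constructor
    · rintro ⟨h1, h2⟩
      exact ⟨h1, fun ⟨m, hm, hms⟩ => h2 ⟨m, hm, hms.symm⟩⟩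
    · rintro ⟨h1, h2⟩
      exact ⟨h1, fun ⟨m, hm, hms⟩ => h2 ⟨m, hm, hms.symm⟩⟩
  have hS2fin : S2.Finite := by rw [hS2eq]; exact Finset.finite_toSet _
  have himsub : (Finset.range t).image (fun m => a * b + m * a) ⊆
      Finset.Ico (a * b) (a * b + a * t) := by
    intro s hs
    simp only [Finset.mem_image, Finset.mem_range] at hs
    obtain ⟨m, hm, rfl⟩ := hs
    simp only [Finset.mem_Ico]
    constructor
    · omega
    · have h1 : (m + 1) * a ≤ t * a := Nat.mul_le_mul_right a (by omega)
      have h2 : t * a = a * t := Nat.mul_comm t a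
      have h3 : (m + 1) * a = m * a + a := by ring
      omega
  have hS2card : S2.ncard = (a - 1) * t := by
    rw [hS2eq, Set.ncard_coe_finset, Finset.card_sdiff_of_subset himsub, Nat.card_Ico,
      Finset.card_image_of_injective _ (fun x y h => Nat.eq_of_mul_eq_mul_left ha0
        (by rw [Nat.mul_comm a x, Nat.mul_comm a y]; omega)), Finset.card_range]
    have : (a - 1) * t = a * t - 1 * t := Nat.sub_mul a 1 t
    omega
  refine ⟨hEq, hdisj, ?_⟩
  rw [hEq, Set.ncard_union_eq hdisj hS1fin hS2fin,
    Set.ncard_image_of_injective _ hinj, hS2card]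
end

section
/- For each fixed i ∈ {2, …, n}, the minimum of #S_x over x ∈ {A_i, A_i + 1, …, A_{i−1} − 1} equals #S_{A_i}. -/
/-! Write `P = A_{i-1} = a_{i-1} A_i` and `N = #{w ∈ Γ_{i-2} | w < b_{i-1}}`. Since `Γₙ` contains
every integer from `aₙbₙ` on, `#S_x = x + #{t ∈ Γₙ | t + x ∉ Γₙ}`. As `b_{j+1} ≥ a_j b_j`, induction
on `j` shows that `Γ_j ∩ [0, P_j b_{i-1}) = P_j · (Γ_{i-2} ∩ [0, b_{i-1}))` with
`P_j = a_{i-1} ⋯ a_j`; in particular `Γₙ ∩ [0, P b_{i-1})` consists of `N` multiples of `P`.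
For `0 < x < P` none of them stays in `Γₙ` after adding `x`, whereas every `t ∈ Γₙ` with
`t ≥ P b_{i-1}` has `t + A_i ∈ Γₙ`. Hence `#S_x ≥ x + N ≥ A_i + N ≥ #S_{A_i}` for `A_i ≤ x < P`. -/

open Finset

theorem ncard_Ap_eq_add {Γ : Set ℕ} {c : ℕ} (hc : ∀ z, c ≤ z → z ∈ Γ) (x : ℕ) :
    (Ap Γ x).ncard = x + {t ∈ Γ | t + x ∉ Γ}.ncard := by
  classical
  set G := (range c).filter (· ∈ Γ)
  set S := (range (x + c)).filter (· ∈ Γ)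
  set T := G.image (· + x)
  -- Inside the window `[0, x + c)`, `Ap Γ x = S \ T`, and `T \ S` is the shift by `x`
  -- of the set on the right.
  have hAp : Ap Γ x = ↑(S \ T) := by
    ext s
    simp only [Ap, Set.mem_ofPred_eq, coe_sdiff, Set.mem_sdiff, mem_coe, S, T, G,
      mem_filter, mem_range, mem_image, not_exists, not_and, and_imp]
    constructor
    · rintro ⟨hs, hne⟩
      refine ⟨⟨?_, hs⟩, fun u _ hu h => hne u hu h.symm⟩
      by_contra! hge
      exact hne (s - x) (hc _ (by omega)) (by omega)
    · rintro ⟨⟨hlt, hs⟩, hnot⟩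
      exact ⟨hs, fun t ht h => hnot t (by omega) ht h.symm⟩
  have hE : {t ∈ Γ | t + x ∉ Γ} = ↑(G.filter (· + x ∉ Γ)) := by
    ext t
    simp only [Set.mem_ofPred_eq, coe_filter, G, mem_filter, mem_range]
    exact ⟨fun ⟨ht, htx⟩ => ⟨⟨by by_contra! h; exact htx (hc _ (by omega)), ht⟩, htx⟩,
      fun ⟨⟨_, ht⟩, htx⟩ => ⟨ht, htx⟩⟩
  have hTS : T \ S = (G.filter (· + x ∉ Γ)).image (· + x) := by
    ext z
    simp only [T, S, G, mem_sdiff, mem_image, mem_filter, mem_range]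
    constructor
    · rintro ⟨⟨u, ⟨hu, huΓ⟩, rfl⟩, hz⟩
      exact ⟨u, ⟨⟨hu, huΓ⟩, fun h => hz ⟨by omega, h⟩⟩, rfl⟩
    · rintro ⟨u, ⟨⟨hu, huΓ⟩, hux⟩, rfl⟩
      exact ⟨⟨u, ⟨hu, huΓ⟩, rfl⟩, fun h => hux h.2⟩
  have hS : S.card = G.card + x := by
    simp only [S, G]
    rw [range_eq_Ico, ← Ico_union_Ico_eq_Ico (Nat.zero_le c) (Nat.le_add_left c x),
      filter_union, card_union_of_disjoint
        (disjoint_filter_filter (Ico_disjoint_Ico_consecutive 0 c (x + c))),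
      filter_true_of_mem (fun z hz => hc z (mem_Ico.mp hz).1), Nat.card_Ico,
      ← range_eq_Ico]
    omega
  have hunion : (S \ T).card + T.card = (T \ S).card + S.card := by
    rw [card_sdiff_add_card, card_sdiff_add_card, union_comm]
  have hinj : Function.Injective (· + x) := add_left_injective x
  rw [hTS, card_image_of_injective _ hinj, card_image_of_injective _ hinj] at hunion
  rw [hAp, hE, Set.ncard_coe_finset, Set.ncard_coe_finset]
  omega

theorem finite_setOf_add_notMem {Γ : Set ℕ} {c : ℕ} (hc : ∀ z, c ≤ z → z ∈ Γ) (x : ℕ) :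
    {t ∈ Γ | t + x ∉ Γ}.Finite :=
  (Set.finite_lt_nat c).subset fun t ht =>
    lt_of_not_ge fun h => ht.2 (hc _ (h.trans (Nat.le_add_right t x)))

section Products

variable {a b : ℕ → ℕ} {n q j : ℕ}

theorem prod_Ioc_pos (ha : ∀ k, 1 ≤ k → k ≤ n → 0 < a k) (hjn : j ≤ n) :
    0 < ∏ k ∈ Ioc q j, a k :=
  prod_pos fun k hk => by
    rw [mem_Ioc] at hk
    exact ha k (by omega) (by omega)

theorem prod_Ioc_mul_le (hb : ∀ k, 1 ≤ k → k + 1 ≤ n → a k * b k ≤ b (k + 1))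
    (hqj : q ≤ j) (hjn : j < n) : (∏ k ∈ Ioc q j, a k) * b (q + 1) ≤ b (j + 1) := by
  induction j, hqj using Nat.le_induction with
  | base => simp
  | succ j hqj ih =>
    calc (∏ k ∈ Ioc q (j + 1), a k) * b (q + 1)
        = a (j + 1) * ((∏ k ∈ Ioc q j, a k) * b (q + 1)) := by rw [prod_Ioc_succ_top hqj]; ring
      _ ≤ a (j + 1) * b (j + 1) := Nat.mul_le_mul_left _ (ih (by omega))
      _ ≤ b (j + 2) := hb _ (by omega) hjn

end Products

namespace IndSG

variable {a b : ℕ → ℕ} {n q j : ℕ}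

theorem mem_of_le {m z : ℕ} (hm : m ≠ 0) (h : a m * b m ≤ z) : z ∈ IndSG a b m := by
  obtain ⟨m, rfl⟩ := Nat.exists_eq_succ_of_ne_zero hm
  exact Or.inr h

theorem mul_mem_succ {m w : ℕ} (hw : w ∈ IndSG a b m) : a (m + 1) * w ∈ IndSG a b (m + 1) :=
  Or.inl ⟨w, hw, rfl⟩

theorem prod_mul_mem (hqj : q ≤ j) {w : ℕ} (hw : w ∈ IndSG a b q) :
    (∏ k ∈ Ioc q j, a k) * w ∈ IndSG a b j := by
  induction j, hqj using Nat.le_induction with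
  | base => simpa using hw
  | succ j hqj ih =>
    rw [prod_Ioc_succ_top hqj, mul_comm _ (a _), mul_assoc]
    exact mul_mem_succ ih

theorem exists_eq_prod_mul_of_mem_of_lt (hb : ∀ k, 1 ≤ k → k + 1 ≤ n → a k * b k ≤ b (k + 1))
    (hqj : q ≤ j) (hjn : j ≤ n) {z : ℕ} (hz : z ∈ IndSG a b j)
    (hlt : z < (∏ k ∈ Ioc q j, a k) * b (q + 1)) :
    ∃ w ∈ IndSG a b q, w < b (q + 1) ∧ (∏ k ∈ Ioc q j, a k) * w = z := by
  induction j, hqj using Nat.le_induction generalizing z with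
  | base => exact ⟨z, hz, by simpa using hlt, by simp⟩
  | succ j hqj ih =>
    rw [prod_Ioc_succ_top hqj, mul_comm _ (a _)] at hlt ⊢
    rw [mul_assoc] at hlt
    have hzb : z < a (j + 1) * b (j + 1) :=
      hlt.trans_le (Nat.mul_le_mul_left _ (prod_Ioc_mul_le hb hqj (by omega)))
    obtain ⟨w, hw, rfl⟩ := hz.resolve_right (not_le.mpr hzb)
    obtain ⟨v, hv, hvb, rfl⟩ := ih (by omega) hw (Nat.lt_of_mul_lt_mul_left hlt)
    exact ⟨v, hv, hvb, mul_assoc _ _ _⟩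

theorem setOf_mem_lt_eq_image (ha : ∀ k, 1 ≤ k → k ≤ n → 0 < a k)
    (hb : ∀ k, 1 ≤ k → k + 1 ≤ n → a k * b k ≤ b (k + 1)) (hqj : q ≤ j) (hjn : j ≤ n) :
    {z ∈ IndSG a b j | z < (∏ k ∈ Ioc q j, a k) * b (q + 1)}
      = (fun w => (∏ k ∈ Ioc q j, a k) * w) '' {w ∈ IndSG a b q | w < b (q + 1)} := by
  ext z
  constructor
  · rintro ⟨hz, hlt⟩
    obtain ⟨w, hw, hwb, rfl⟩ := exists_eq_prod_mul_of_mem_of_lt hb hqj hjn hz hlt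
    exact ⟨w, ⟨hw, hwb⟩, rfl⟩
  · rintro ⟨w, ⟨hw, hwb⟩, rfl⟩
    exact ⟨prod_mul_mem hqj hw, Nat.mul_lt_mul_of_pos_left hwb (prod_Ioc_pos ha hjn)⟩

theorem add_prod_mem_of_le (ha : ∀ k, 1 ≤ k → k ≤ n → 0 < a k) (hqj : q < j) (hjn : j ≤ n)
    {t : ℕ} (ht : t ∈ IndSG a b j) (hle : (∏ k ∈ Ioc q j, a k) * b (q + 1) ≤ t) :
    t + ∏ k ∈ Ioc (q + 1) j, a k ∈ IndSG a b j := by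
  induction j, hqj using Nat.le_induction generalizing t with
  | base => exact mem_of_le (by omega) (by simp at hle ⊢; omega)
  | succ j hqj ih =>
    rcases ht with ⟨w, hw, rfl⟩ | ht
    · rw [prod_Ioc_succ_top (by omega), mul_comm _ (a _), mul_assoc] at hle
      rw [prod_Ioc_succ_top hqj, mul_comm _ (a _), ← mul_add]
      exact mul_mem_succ (ih (by omega) hw (Nat.le_of_mul_le_mul_left hle (ha _ (by omega) hjn)))
    · exact mem_of_le (by omega) (ht.trans (Nat.le_add_right _ _))

theorem ncard_le_ncard_setOf_add_notMem (ha : ∀ k, 1 ≤ k → k ≤ n → 0 < a k)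
    (hb : ∀ k, 1 ≤ k → k + 1 ≤ n → a k * b k ≤ b (k + 1)) (hqn : q < n) {y : ℕ} (hy : 0 < y)
    (hyP : y < ∏ k ∈ Ioc q n, a k) :
    {w ∈ IndSG a b q | w < b (q + 1)}.ncard ≤ {t ∈ IndSG a b n | t + y ∉ IndSG a b n}.ncard := by
  have himage := Set.ext_iff.mp (setOf_mem_lt_eq_image ha hb hqn.le le_rfl)
  set P := ∏ k ∈ Ioc q n, a k
  rw [← Set.ncard_image_of_injective _ (mul_right_injective₀ (prod_Ioc_pos ha le_rfl).ne')]
  refine Set.ncard_le_ncard ?_ (finite_setOf_add_notMem (fun z => mem_of_le (by omega)) y)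
  rintro _ ⟨s, hs, rfl⟩
  refine ⟨((himage _).mpr ⟨s, hs, rfl⟩).1, fun hsy => ?_⟩
  have hlt : P * s + y < P * b (q + 1) :=
    calc P * s + y < P * (s + 1) := by rw [mul_add_one]; omega
      _ ≤ P * b (q + 1) := Nat.mul_le_mul_left _ hs.2
  obtain ⟨w, -, hw⟩ := (himage _).mp ⟨hsy, hlt⟩
  have hPy : P ∣ y := (Nat.dvd_add_right (dvd_mul_right P s)).mp (hw ▸ dvd_mul_right P w)
  exact absurd (Nat.le_of_dvd hy hPy) (not_le.mpr hyP)

theorem ncard_setOf_add_prod_notMem_le (ha : ∀ k, 1 ≤ k → k ≤ n → 0 < a k)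
    (hb : ∀ k, 1 ≤ k → k + 1 ≤ n → a k * b k ≤ b (k + 1)) (hqn : q < n) :
    {t ∈ IndSG a b n | t + ∏ k ∈ Ioc (q + 1) n, a k ∉ IndSG a b n}.ncard
      ≤ {w ∈ IndSG a b q | w < b (q + 1)}.ncard :=
  calc _ ≤ {z ∈ IndSG a b n | z < (∏ k ∈ Ioc q n, a k) * b (q + 1)}.ncard :=
        Set.ncard_le_ncard
          (by
            rintro t ⟨ht, htn⟩
            exact ⟨ht, not_le.mp fun hle => htn (add_prod_mem_of_le ha hqn le_rfl ht hle)⟩)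
          ((Set.finite_lt_nat _).subset fun z hz => hz.2)
    _ = _ := by
      rw [setOf_mem_lt_eq_image ha hb hqn.le le_rfl,
        Set.ncard_image_of_injective _ (mul_right_injective₀ (prod_Ioc_pos ha le_rfl).ne')]

end IndSG

theorem stmt5_general (n : ℕ) (a b : ℕ → ℕ)
    (ha : ∀ i, 1 ≤ i → i ≤ n → 2 ≤ a i)
    (hb : ∀ i, 1 ≤ i → i + 1 ≤ n → a i * b i ≤ b (i + 1))
    (A : ℕ → ℕ) (hA : ∀ i, A i = ∏ j ∈ Finset.Icc i n, a j)
    (i : ℕ) (hi1 : 2 ≤ i) (hi2 : i ≤ n) :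
    sInf {m | ∃ x, A i ≤ x ∧ x ≤ A (i - 1) - 1 ∧ m = (Ap (IndSG a b n) x).ncard}
      = (Ap (IndSG a b n) (A i)).ncard := by
  obtain ⟨q, rfl⟩ : ∃ q, i = q + 1 + 1 := ⟨i - 2, by omega⟩
  rw [Nat.add_sub_cancel]
  have ha₀ : ∀ k, 1 ≤ k → k ≤ n → 0 < a k := fun k h1 h2 => two_pos.trans_le (ha k h1 h2)
  have hAi : A (q + 1 + 1) = ∏ k ∈ Ioc (q + 1) n, a k := by rw [hA, Icc_add_one_left_eq_Ioc]
  have hAi' : A (q + 1) = ∏ k ∈ Ioc q n, a k := by rw [hA, Icc_add_one_left_eq_Ioc]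
  have hfac : A (q + 1) = a (q + 1) * A (q + 1 + 1) := by
    rw [hAi', hAi, ← Icc_add_one_left_eq_Ioc q, Icc_eq_cons_Ioc (by omega), prod_cons]
  have hpos : 0 < A (q + 1 + 1) := hAi ▸ prod_Ioc_pos ha₀ le_rfl
  have hcof : ∀ z, a n * b n ≤ z → z ∈ IndSG a b n := fun z => IndSG.mem_of_le (by omega)
  have hUB := IndSG.ncard_setOf_add_prod_notMem_le ha₀ hb (q := q) (by omega)
  rw [← hAi] at hUB
  have hle : A (q + 1 + 1) ≤ A (q + 1) - 1 := by
    have := Nat.mul_le_mul_right (A (q + 1 + 1)) (ha (q + 1) (by omega) (by omega))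
    omega
  refine IsLeast.csInf_eq ⟨⟨A (q + 1 + 1), le_rfl, hle, rfl⟩, ?_⟩
  rintro _ ⟨x, hx1, hx2, rfl⟩
  have hLB := IndSG.ncard_le_ncard_setOf_add_notMem ha₀ hb (q := q) (by omega) (y := x)
    (by omega) (by omega)
  rw [ncard_Ap_eq_add hcof, ncard_Ap_eq_add hcof]
  omega

theorem stmt5 (n : ℕ) (hn : 1 ≤ n) (a b : ℕ → ℕ)
    (ha : ∀ i, 1 ≤ i → i ≤ n → 2 ≤ a i)
    (hb1 : 1 ≤ b 1)
    (hb : ∀ i, 1 ≤ i → i + 1 ≤ n → a i * b i ≤ b (i + 1))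
    (A : ℕ → ℕ) (hA : ∀ i, A i = ∏ j ∈ Finset.Icc i n, a j)
    (i : ℕ) (hi1 : 2 ≤ i) (hi2 : i ≤ n) :
    sInf {m | ∃ x, A i ≤ x ∧ x ≤ A (i - 1) - 1 ∧ m = (Ap (IndSG a b n) x).ncard}
      = (Ap (IndSG a b n) (A i)).ncard :=
  stmt5_general n a b ha hb A hA i hi1 hi2
end

section
/- The minimum of #S_x over x ∈ {1, 2, …, A₁} equals min{#S_1, #S_{A_n}, #S_{A_{n−1}}, …, #S_{A_2}, #S_{A_1}}. (Since A₁ is the multiplicity of Γₙ, this minimum is the second Feng–Rao number E(Γₙ, 2).) -/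
/-! Write `Γₙ = a·Γₙ₋₁ ∪ [a b, ∞)` with `a = aₙ`, `b = bₙ`, and note `[b, ∞) ⊆ Γₙ₋₁` and
`A₁ ≤ a b`. Counting an Apéry set through the window `[a b - x, a b)` gives, for `a ∤ x`,
`#Ap(Γₙ, x) = #(Γₙ ∩ [0, a b)) + x - #(Γₙ ∩ [a b - x, a b))`, and that window meets `Γₙ` in at
most `x / a ≤ x / 2` points; hence `#Ap(Γₙ, 1) ≤ #Ap(Γₙ, x)`. For multiples,
`#Ap(Γₙ, a y) = #Ap(Γₙ₋₁, y) + (a - 1) y`, so minimising `#Ap(Γₙ, x) + w x` over multiples of `a`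
is minimising `#Ap(Γₙ₋₁, y) + (a w + a - 1) y`. Induction on `n`, for every weight `w`, shows
that `#Ap(Γₙ, x) + w x` is minimised on `[1, A₁]` at `1` or at some `Aᵢ`. -/

/-- Above `C` the Apéry set of `T` consists of the `u + x` with `u ∈ [C - x, C) \ T`, so its
part there has exactly `x` elements minus those of `T` in that window. -/
theorem ncard_ap_add_ncard_inter_Ico {T : Set ℕ} {C x : ℕ} (hT : Set.Ici C ⊆ T) (hx : x ≤ C) :
    (Ap T x).ncard + (T ∩ Set.Ico (C - x) C).ncard = (Ap T x ∩ Set.Iio C).ncard + x := by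
  have hsplit : Ap T x = (Ap T x ∩ Set.Iio C) ∪ (· + x) '' (Set.Ico (C - x) C \ T) := by
    ext s
    simp only [Ap, Set.mem_union, Set.mem_inter_iff, Set.mem_Iio, Set.mem_image, Set.mem_sdiff,
      Set.mem_Ico, Set.mem_ofPred_eq]
    constructor
    · rintro ⟨hs, hap⟩
      by_cases hsC : s < C
      · exact Or.inl ⟨⟨hs, hap⟩, hsC⟩
      · have hsx : s < C + x := by
          by_contra! h
          exact hap (s - x) (hT (by simp only [Set.mem_Ici]; omega)) (by omega)
        exact Or.inr ⟨s - x, ⟨⟨by omega, by omega⟩, fun h => hap _ h (by omega)⟩, by omega⟩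
    · rintro (h | ⟨u, ⟨⟨hu1, hu2⟩, huT⟩, rfl⟩)
      · exact h.1
      · refine ⟨hT (by simp only [Set.mem_Ici]; omega), fun t ht he => huT ?_⟩
        rwa [Nat.add_right_cancel he]
  have hdisj : Disjoint (Ap T x ∩ Set.Iio C) ((· + x) '' (Set.Ico (C - x) C \ T)) := by
    rw [Set.disjoint_left]
    rintro _ ⟨_, hs⟩ ⟨u, ⟨⟨hu, _⟩, _⟩, rfl⟩
    simp only [Set.mem_Iio] at hs
    omega
  have hcompl := Set.ncard_inter_add_ncard_sdiff_eq_ncard (Set.Ico (C - x) C) T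
  rw [Set.inter_comm, Set.ncard_Ico_nat] at hcompl
  have hunion := Set.ncard_union_eq hdisj ((Set.finite_Iio C).inter_of_right _)
    ((Set.finite_Ico _ _).sdiff.image _)
  rw [← hsplit, Set.ncard_image_of_injective _ (add_left_injective x)] at hunion
  omega

def indStep (A B : ℕ) (S : Set ℕ) : Set ℕ := (A * ·) '' S ∪ Set.Ici (A * B)

namespace indStep

variable {A B : ℕ} {S : Set ℕ}

theorem Ici_subset : Set.Ici (A * B) ⊆ indStep A B S := Set.subset_union_right

theorem mul_mem {t : ℕ} (ht : t ∈ S) : A * t ∈ indStep A B S := Or.inl ⟨t, ht, rfl⟩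

theorem exists_eq_mul {s : ℕ} (hs : s ∈ indStep A B S) (hsAB : s < A * B) :
    ∃ t ∈ S, t < B ∧ A * t = s := by
  rcases hs with ⟨t, ht, rfl⟩ | hs
  · exact ⟨t, ht, Nat.lt_of_mul_lt_mul_left hsAB, rfl⟩
  · exact absurd hs (by simpa using hsAB)

theorem ncard_inter_Ico_le_div (hA : 0 < A) (x : ℕ) :
    (indStep A B S ∩ Set.Ico (A * B - x) (A * B)).ncard ≤ x / A := by
  have hsub : indStep A B S ∩ Set.Ico (A * B - x) (A * B)
      ⊆ (A * ·) '' Set.Ico (B - x / A) B := by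
    rintro s ⟨hs, hs1, hs2⟩
    obtain ⟨t, -, htB, rfl⟩ := exists_eq_mul hs hs2
    refine ⟨t, ⟨?_, htB⟩, rfl⟩
    have hmul : (B - t) * A ≤ x := by
      rw [Nat.mul_comm, Nat.mul_sub]
      omega
    have := (Nat.le_div_iff_mul_le hA).mpr hmul
    omega
  calc _ ≤ ((A * ·) '' Set.Ico (B - x / A) B).ncard := Set.ncard_le_ncard hsub
    _ ≤ (Set.Ico (B - x / A) B).ncard := Set.ncard_image_le
    _ ≤ x / A := by rw [Set.ncard_Ico_nat]; exact tsub_tsub_le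

theorem ap_inter_Iio_of_not_dvd {x : ℕ} (hx : ¬ A ∣ x) :
    Ap (indStep A B S) x ∩ Set.Iio (A * B) = indStep A B S ∩ Set.Iio (A * B) := by
  refine Set.Subset.antisymm (Set.inter_subset_inter_left _ fun s hs => hs.1) ?_
  rintro s ⟨hs, hsAB⟩
  refine ⟨⟨hs, fun u hu he => hx ?_⟩, hsAB⟩
  simp only [Set.mem_Iio] at hsAB
  obtain ⟨t, -, -, rfl⟩ := exists_eq_mul hs hsAB
  obtain ⟨v, -, -, rfl⟩ := exists_eq_mul hu (by omega)
  exact (Nat.dvd_add_right (dvd_mul_right A v)).mp (he ▸ dvd_mul_right A t)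

theorem ncard_ap_one_le_of_not_dvd (hA : 2 ≤ A) {x : ℕ} (hx1 : 1 ≤ x) (hx : x ≤ A * B)
    (hdvd : ¬ A ∣ x) :
    (Ap (indStep A B S) 1).ncard ≤ (Ap (indStep A B S) x).ncard := by
  have hdvd1 : ¬ A ∣ 1 := fun h => by have := Nat.le_of_dvd one_pos h; omega
  have h1 := ncard_ap_add_ncard_inter_Ico (Ici_subset (S := S)) (hx1.trans hx)
  have hx' := ncard_ap_add_ncard_inter_Ico (Ici_subset (S := S)) hx
  rw [ap_inter_Iio_of_not_dvd hdvd1] at h1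
  rw [ap_inter_Iio_of_not_dvd hdvd] at hx'
  have w1 := ncard_inter_Ico_le_div (S := S) (A := A) (B := B) (by omega) 1
  have wx := ncard_inter_Ico_le_div (S := S) (A := A) (B := B) (by omega) x
  have hxA : x / A ≤ x / 2 := Nat.div_le_div_left hA (by omega)
  rw [Nat.div_eq_of_lt (by omega)] at w1
  omega

theorem inter_Ico_mul (hA : 0 < A) (y : ℕ) :
    indStep A B S ∩ Set.Ico (A * B - A * y) (A * B) = (A * ·) '' (S ∩ Set.Ico (B - y) B) := by
  rw [← Nat.mul_sub]
  ext s
  constructor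
  · rintro ⟨hs, hs1, hs2⟩
    obtain ⟨t, ht, htB, rfl⟩ := exists_eq_mul hs hs2
    exact ⟨t, ⟨ht, Nat.le_of_mul_le_mul_left hs1 hA, htB⟩, rfl⟩
  · rintro ⟨t, ⟨ht, ht1, ht2⟩, rfl⟩
    exact ⟨mul_mem ht, Nat.mul_le_mul_left A ht1, Nat.mul_lt_mul_of_pos_left ht2 hA⟩

theorem ap_mul_inter_Iio (hA : 0 < A) (y : ℕ) :
    Ap (indStep A B S) (A * y) ∩ Set.Iio (A * B) = (A * ·) '' (Ap S y ∩ Set.Iio B) := by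
  ext s
  constructor
  · rintro ⟨⟨hs, hap⟩, hsAB⟩
    obtain ⟨t, ht, htB, rfl⟩ := exists_eq_mul hs hsAB
    exact ⟨t, ⟨⟨ht, fun u hu he => hap _ (mul_mem hu) (by rw [he, Nat.mul_add])⟩, htB⟩, rfl⟩
  · rintro ⟨t, ⟨⟨ht, hap⟩, htB⟩, rfl⟩
    have htAB : A * t < A * B := Nat.mul_lt_mul_of_pos_left htB hA
    refine ⟨⟨mul_mem ht, fun u hu he => ?_⟩, htAB⟩
    replace he : A * t = u + A * y := he
    obtain ⟨v, hv, -, rfl⟩ := exists_eq_mul hu (by omega)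
    exact hap v hv (Nat.eq_of_mul_eq_mul_left hA (by rw [he, Nat.mul_add]))

theorem ncard_ap_mul_add (hA : 0 < A) (hS : Set.Ici B ⊆ S) {y : ℕ} (hy : y ≤ B) :
    (Ap (indStep A B S) (A * y)).ncard + y = (Ap S y).ncard + A * y := by
  have hinj : Function.Injective (A * ·) := fun _ _ h => Nat.eq_of_mul_eq_mul_left hA h
  have hΓ := ncard_ap_add_ncard_inter_Ico (Ici_subset (S := S)) (Nat.mul_le_mul_left A hy)
  have hS := ncard_ap_add_ncard_inter_Ico hS hy
  rw [inter_Ico_mul hA, ap_mul_inter_Iio hA, Set.ncard_image_of_injective _ hinj,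
    Set.ncard_image_of_injective _ hinj] at hΓ
  omega

theorem ncard_ap_mul_add_mul (hA : 0 < A) (hS : Set.Ici B ⊆ S) {y : ℕ} (hy : y ≤ B) (w : ℕ) :
    (Ap (indStep A B S) (A * y)).ncard + w * (A * y)
      = (Ap S y).ncard + (A * w + (A - 1)) * y := by
  have h := ncard_ap_mul_add hA hS hy
  obtain ⟨c, rfl⟩ := Nat.exists_eq_add_of_le' hA
  simp only [Nat.add_sub_cancel]
  nlinarith

end indStep

theorem IndSG_succ (a b : ℕ → ℕ) (n : ℕ) :
    IndSG a b (n + 1) = indStep (a (n + 1)) (b (n + 1)) (IndSG a b n) := rfl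

section Inductive

variable {a b : ℕ → ℕ} {n : ℕ}

theorem Ici_subset_IndSG (hb : ∀ i, 1 ≤ i → i + 1 ≤ n + 1 → a i * b i ≤ b (i + 1)) :
    Set.Ici (b (n + 1)) ⊆ IndSG a b n := by
  cases n with
  | zero => exact Set.subset_univ _
  | succ m =>
    exact (Set.Ici_subset_Ici.mpr (hb (m + 1) (by omega) le_rfl)).trans indStep.Ici_subset

theorem prod_Icc_one_le (hb1 : 1 ≤ b 1)
    (hb : ∀ i, 1 ≤ i → i + 1 ≤ n + 1 → a i * b i ≤ b (i + 1)) :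
    ∏ j ∈ Finset.Icc 1 n, a j ≤ b (n + 1) := by
  induction n with
  | zero => simpa using hb1
  | succ m ih =>
    calc ∏ j ∈ Finset.Icc 1 (m + 1), a j = (∏ j ∈ Finset.Icc 1 m, a j) * a (m + 1) :=
          Finset.prod_Icc_succ_top (by omega) a
      _ ≤ b (m + 1) * a (m + 1) :=
          Nat.mul_le_mul_right _ (ih fun i hi1 hi => hb i hi1 (by omega))
      _ = a (m + 1) * b (m + 1) := Nat.mul_comm _ _
      _ ≤ b (m + 2) := hb (m + 1) (by omega) le_rfl

def tailProds (a : ℕ → ℕ) (n : ℕ) : Set ℕ :=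
  {x | ∃ i, 1 ≤ i ∧ i ≤ n ∧ x = ∏ j ∈ Finset.Icc i n, a j}

theorem mem_Icc_of_mem_insert_tailProds (ha : ∀ i, 1 ≤ i → i ≤ n → 0 < a i) {x : ℕ}
    (hx : x ∈ insert 1 (tailProds a n)) : x ∈ Set.Icc 1 (∏ j ∈ Finset.Icc 1 n, a j) := by
  have ha' : ∀ j ∈ Finset.Icc 1 n, 0 < a j := fun j hj =>
    ha j (Finset.mem_Icc.mp hj).1 (Finset.mem_Icc.mp hj).2
  rcases hx with rfl | ⟨i, hi1, -, rfl⟩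
  · exact ⟨le_rfl, Finset.prod_pos ha'⟩
  · exact ⟨Finset.prod_pos fun j hj => ha' j (Finset.Icc_subset_Icc_left hi1 hj),
      Finset.prod_le_prod_of_subset_of_one_le' (Finset.Icc_subset_Icc_left hi1)
        fun j hj _ => ha' j hj⟩

theorem mul_mem_tailProds_succ {y : ℕ} (hy : y ∈ insert 1 (tailProds a n)) :
    a (n + 1) * y ∈ tailProds a (n + 1) := by
  rcases hy with rfl | ⟨i, hi1, hin, rfl⟩
  · exact ⟨n + 1, by omega, le_rfl, by simp⟩
  · exact ⟨i, hi1, by omega, by rw [Finset.prod_Icc_succ_top (by omega), Nat.mul_comm]⟩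

theorem exists_mem_insert_tailProds_ncard_ap_add_mul_le (ha : ∀ i, 1 ≤ i → i ≤ n → 2 ≤ a i)
    (hb1 : 1 ≤ b 1) (hb : ∀ i, 1 ≤ i → i + 1 ≤ n → a i * b i ≤ b (i + 1)) (w : ℕ) {x : ℕ}
    (hx1 : 1 ≤ x) (hx : x ≤ ∏ j ∈ Finset.Icc 1 n, a j) :
    ∃ x' ∈ insert 1 (tailProds a n),
      (Ap (IndSG a b n) x').ncard + w * x' ≤ (Ap (IndSG a b n) x).ncard + w * x := by
  induction n generalizing w x with
  | zero => exact ⟨x, Or.inl (by simp at hx; omega), le_rfl⟩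
  | succ n ih =>
    have hA : 2 ≤ a (n + 1) := ha (n + 1) (by omega) le_rfl
    have hS := Ici_subset_IndSG hb
    have hPB := prod_Icc_one_le (n := n) hb1 fun i hi1 hi => hb i hi1 (by omega)
    rw [Finset.prod_Icc_succ_top (by omega), Nat.mul_comm] at hx
    by_cases hdvd : a (n + 1) ∣ x
    · obtain ⟨y, rfl⟩ := hdvd
      obtain ⟨y', hy', hle⟩ := ih (fun i hi1 hi => ha i hi1 (by omega))
        (fun i hi1 hi => hb i hi1 (by omega)) (a (n + 1) * w + (a (n + 1) - 1))
        (Nat.pos_of_mul_pos_left hx1) (Nat.le_of_mul_le_mul_left hx (by omega))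
      have hy'P := (mem_Icc_of_mem_insert_tailProds
        (fun i hi1 hi => zero_lt_two.trans_le (ha i hi1 (by omega))) hy').2
      refine ⟨a (n + 1) * y', Or.inr (mul_mem_tailProds_succ hy'), ?_⟩
      rwa [IndSG_succ, indStep.ncard_ap_mul_add_mul (by omega) hS (hy'P.trans hPB),
        indStep.ncard_ap_mul_add_mul (by omega) hS
          ((Nat.le_of_mul_le_mul_left hx (by omega)).trans hPB)]
    · refine ⟨1, Or.inl rfl, add_le_add ?_ (Nat.mul_le_mul_left w hx1)⟩
      exact indStep.ncard_ap_one_le_of_not_dvd hA hx1 (hx.trans (Nat.mul_le_mul_left _ hPB)) hdvd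

end Inductive

/-- The minimum of `#Ap(Γₙ,x)` over the fundamental interval `{1,…,A₁}`
(i.e. the second Feng–Rao number `E(Γₙ,2)`) equals
`min {#S₁, #S_{Aₙ}, …, #S_{A₂}, #S_{A₁}}`. -/
theorem stmt6 (n : ℕ) (hn : 1 ≤ n) (a b : ℕ → ℕ)
    (ha : ∀ i, 1 ≤ i → i ≤ n → 2 ≤ a i)
    (hb1 : 1 ≤ b 1)
    (hb : ∀ i, 1 ≤ i → i + 1 ≤ n → a i * b i ≤ b (i + 1))
    (A : ℕ → ℕ) (hA : ∀ i, A i = ∏ j ∈ Finset.Icc i n, a j) :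
    sInf {m | ∃ x, 1 ≤ x ∧ x ≤ A 1 ∧ m = (Ap (IndSG a b n) x).ncard}
      = min ((Ap (IndSG a b n) 1).ncard)
          (sInf {m | ∃ i, 1 ≤ i ∧ i ≤ n ∧ m = (Ap (IndSG a b n) (A i)).ncard}) := by
  set N : ℕ → ℕ := fun x => (Ap (IndSG a b n) x).ncard
  set L := {m | ∃ x, 1 ≤ x ∧ x ≤ A 1 ∧ m = N x}
  set R := {m | ∃ i, 1 ≤ i ∧ i ≤ n ∧ m = N (A i)}
  have hcand : ∀ x ∈ insert 1 (tailProds a n), 1 ≤ x ∧ x ≤ A 1 := fun x hx =>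
    hA 1 ▸ mem_Icc_of_mem_insert_tailProds (fun i hi1 hi => zero_lt_two.trans_le (ha i hi1 hi)) hx
  have hA1 := hcand 1 (Set.mem_insert 1 _)
  apply le_antisymm
  · obtain ⟨i, hi1, hin, hi⟩ := Nat.sInf_mem (s := R) ⟨_, 1, le_rfl, hn, rfl⟩
    refine le_min (Nat.sInf_le ⟨1, hA1.1, hA1.2, rfl⟩) (hi ▸ Nat.sInf_le ?_)
    obtain ⟨hAi1, hAi⟩ := hcand (A i) (Or.inr ⟨i, hi1, hin, hA i⟩)
    exact ⟨A i, hAi1, hAi, rfl⟩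
  · obtain ⟨x, hx1, hx, hmin⟩ := Nat.sInf_mem (s := L) ⟨_, 1, hA1.1, hA1.2, rfl⟩
    obtain ⟨x', hx', hle⟩ :=
      exists_mem_insert_tailProds_ncard_ap_add_mul_le ha hb1 hb 0 hx1 (hA 1 ▸ hx)
    simp only [Nat.zero_mul, Nat.add_zero] at hle
    rw [hmin]
    rcases hx' with rfl | ⟨i, hi1, hin, rfl⟩
    · exact (min_le_left _ _).trans hle
    · refine (min_le_right _ _).trans ((Nat.sInf_le (s := R) ?_).trans hle)
      exact ⟨i, hi1, hin, by rw [hA]⟩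
end

section
/- Let a₁ and b₁ be integers greater than one, set Γ₁ = a₁·ℕ ∪ (a₁b₁ + ℕ) and Λ¹ = {0, a₁, 2a₁, …, b₁a₁}. Then: (1) Ap(Γ₁, 1) = Λ¹; (2) for every x with 1 < x < a₁, Ap(Γ₁, x) = Λ¹ ∪ {a₁b₁+1, …, a₁b₁+x−1}; (3) Ap(Γ₁, a₁) = {0} ∪ {a₁b₁+1, …, a₁b₁+(a₁−1)}. -/
/-- No multiple of `a` lies strictly between `a*b` and `a*b + a`. -/
lemma no_mul_between (a b m : ℕ) (h1 : a * b < a * m) (h2 : a * m < a * b + a) : False := by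
  have hb : b < m := Nat.lt_of_mul_lt_mul_left h1
  have h2' : a * m < a * (b + 1) := by rw [Nat.mul_succ]; exact h2
  have hm : m < b + 1 := Nat.lt_of_mul_lt_mul_left h2'
  omega

theorem stmt8 (a1 b1 : ℕ) (ha : 1 < a1) (hb : 1 < b1)
    (Γ : Set ℕ) (hΓ : Γ = {x | ∃ m, x = a1 * m} ∪ {x | a1 * b1 ≤ x})
    (Λ : Set ℕ) (hΛ : Λ = {x | ∃ m, m ≤ b1 ∧ x = m * a1}) :
    Ap Γ 1 = Λ
    ∧ (∀ x, 1 < x → x < a1 →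
        Ap Γ x = Λ ∪ {y | a1 * b1 + 1 ≤ y ∧ y ≤ a1 * b1 + x - 1})
    ∧ Ap Γ a1 = {0} ∪ {y | a1 * b1 + 1 ≤ y ∧ y ≤ a1 * b1 + (a1 - 1)} := by
  subst hΓ hΛ
  have ha0 : 0 < a1 := by omega
  refine ⟨?_, ?_, ?_⟩
  · -- Part 1
    ext s
    simp only [Ap, Set.mem_union, Set.mem_setOf_eq]
    constructor
    · rintro ⟨hs, hcond⟩
      have hsle : s ≤ a1 * b1 := by
        by_contra h
        push_neg at h
        exact hcond (s - 1) (Or.inr (Nat.le_sub_one_of_lt h))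
          (by omega)
      rcases hs with ⟨m, rfl⟩ | hge
      · exact ⟨m, Nat.le_of_mul_le_mul_left hsle ha0, (mul_comm a1 m)⟩
      · exact ⟨b1, le_refl _, by rw [mul_comm]; omega⟩
    · rintro ⟨m, hm, rfl⟩
      refine ⟨Or.inl ⟨m, mul_comm m a1⟩, ?_⟩
      rintro t (⟨k, rfl⟩ | hge) h
      · rw [mul_comm] at h
        exact no_mul_between a1 k m (by linarith) (by linarith)
      · have : m * a1 ≤ b1 * a1 := Nat.mul_le_mul_right a1 hm
        rw [mul_comm a1 b1] at hge
        linarith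
  · -- Part 2
    intro x hx1 hxa
    ext s
    simp only [Ap, Set.mem_union, Set.mem_setOf_eq]
    constructor
    · rintro ⟨hs, hcond⟩
      have hslt : s < a1 * b1 + x := by
        by_contra h
        push_neg at h
        exact hcond (s - x) (Or.inr (Nat.le_sub_of_add_le h))
          (by omega)
      rcases hs with ⟨m, rfl⟩ | hge
      · left
        refine ⟨m, ?_, mul_comm a1 m⟩
        by_contra hm
        push_neg at hm
        have h1 : a1 * (b1 + 1) ≤ a1 * m := Nat.mul_le_mul_left a1 hm
        rw [Nat.mul_succ] at h1
        linarith
      · rcases eq_or_lt_of_le hge with heq | hlt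
        · exact Or.inl ⟨b1, le_refl _, by rw [mul_comm]; omega⟩
        · exact Or.inr ⟨hlt, Nat.le_sub_one_of_lt hslt⟩
    · rintro (⟨m, hm, rfl⟩ | ⟨h1, h2⟩)
      · refine ⟨Or.inl ⟨m, mul_comm m a1⟩, ?_⟩
        rintro t (⟨k, rfl⟩ | hge) h
        · rw [mul_comm] at h
          exact no_mul_between a1 k m (by linarith) (by linarith)
        · have : m * a1 ≤ b1 * a1 := Nat.mul_le_mul_right a1 hm
          rw [mul_comm a1 b1] at hge
          linarith
      · have h2' : s < a1 * b1 + x :=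
          lt_of_le_of_lt h2 (Nat.sub_lt (by positivity) one_pos)
        refine ⟨Or.inr (by linarith), ?_⟩
        rintro t (⟨k, rfl⟩ | hge) h
        · have hbm : a1 * (b1 - 1) + a1 = a1 * b1 := by
            rw [← Nat.mul_succ]
            congr 1
            omega
          exact no_mul_between a1 (b1 - 1) k (by linarith) (by linarith)
        · linarith
  · -- Part 3
    ext s
    simp only [Ap, Set.mem_union, Set.mem_setOf_eq, Set.mem_singleton_iff]
    have hA : (a1 - 1) + 1 = a1 := Nat.succ_pred_eq_of_pos ha0
    constructor
    · rintro ⟨hs, hcond⟩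
      have hslt : s < a1 * b1 + a1 := by
        by_contra h
        push_neg at h
        exact hcond (s - a1) (Or.inr (Nat.le_sub_of_add_le h))
          (by omega)
      have hne : s ≠ a1 * b1 := by
        intro heq
        refine hcond (a1 * (b1 - 1)) (Or.inl ⟨b1 - 1, rfl⟩) ?_
        rw [heq, ← Nat.mul_succ]
        congr 1
        omega
      rcases hs with ⟨m, rfl⟩ | hge
      · rcases Nat.eq_zero_or_pos m with rfl | hm
        · exact Or.inl (by simp)
        · exfalso
          refine hcond (a1 * (m - 1)) (Or.inl ⟨m - 1, rfl⟩) ?_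
          rw [← Nat.mul_succ]
          congr 1
          omega
      · right
        constructor
        · omega
        · linarith [Nat.lt_of_le_of_ne hge (Ne.symm hne)]
    · rintro (rfl | ⟨h1, h2⟩)
      · refine ⟨Or.inl ⟨0, by simp⟩, ?_⟩
        rintro t _ h
        omega
      · refine ⟨Or.inr (by linarith), ?_⟩
        rintro t (⟨k, rfl⟩ | hge) h
        · have hk : a1 * k + a1 = a1 * (k + 1) := (Nat.mul_succ a1 k).symm
          exact no_mul_between a1 b1 (k + 1) (by linarith) (by linarith)
        · linarith
end

section
/- The Apéry sets of Γₙ satisfy: (1) Ap(Γₙ, 1) = Λ¹ ∪ Λ² ∪ ⋯ ∪ Λⁿ; (2) for every x with 1 < x < aₙ, Ap(Γₙ, x) = Λ¹ ∪ ⋯ ∪ Λⁿ ∪ {aₙbₙ+1, …, aₙbₙ+x−1}. -/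
/-!
Below `aₙbₙ` every element of `Γₙ` is a multiple of `aₙ`, and `Γₙ` contains every integer from
`aₙbₙ` on. Hence for `0 < x < aₙ` no element of `Γₙ` below `aₙbₙ + x` exceeds another one by `x`,
while everything from `aₙbₙ + x` on does; so `Ap(Γₙ, x)` consists of `Γₙ ∩ [0, aₙbₙ]` together with
`aₙbₙ + 1, …, aₙbₙ + x - 1`. Unrolling
`Γᵢ₊₁ ∩ [0, aᵢ₊₁bᵢ₊₁] = aᵢ₊₁ · ((Γᵢ ∩ [0, aᵢbᵢ]) ∪ (aᵢbᵢ, bᵢ₊₁])` shows that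
`Γₙ ∩ [0, aₙbₙ] = Λ¹ ∪ ⋯ ∪ Λⁿ`.
-/

section StepSemigroup

variable {S : Set ℕ} {a c x : ℕ}

lemma mul_add_notMem_image_mul_union (hx : 0 < x) (hxa : x < a) {w : ℕ} (hw : w < c) :
    a * w + x ∉ (fun t => a * t) '' S ∪ {y | a * c ≤ y} := by
  rintro (⟨v, -, hv⟩ | hle)
  · have hdvd : a ∣ x := (Nat.dvd_add_right (dvd_mul_right a w)).mp (hv ▸ dvd_mul_right a v)
    exact hx.ne' (Nat.eq_zero_of_dvd_of_lt hdvd hxa)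
  · have : a * (w + 1) ≤ a * c := Nat.mul_le_mul_left a hw
    simp only [Set.mem_ofPred_eq] at hle
    nlinarith

lemma exists_lt_eq_mul_of_mem_image_mul_union {t : ℕ}
    (ht : t ∈ (fun t => a * t) '' S ∪ {y | a * c ≤ y}) (htc : t < a * c) :
    ∃ w < c, t = a * w := by
  rcases ht with ⟨w, -, rfl⟩ | hle
  · exact ⟨w, Nat.lt_of_mul_lt_mul_left htc, rfl⟩
  · exact absurd hle htc.not_ge

lemma ap_image_mul_union (hx : 0 < x) (hxa : x < a) :
    Ap ((fun t => a * t) '' S ∪ {y | a * c ≤ y}) x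
      = {y | y ∈ (fun t => a * t) '' S ∪ {y | a * c ≤ y} ∧ y ≤ a * c}
        ∪ {y | a * c + 1 ≤ y ∧ y ≤ a * c + x - 1} := by
  ext s
  simp only [Ap, Set.mem_ofPred_eq, Set.mem_union]
  constructor
  · rintro ⟨hs, hap⟩
    refine (le_or_gt s (a * c)).imp (⟨hs, ·⟩) fun hgt => ⟨hgt, ?_⟩
    by_contra! h
    exact hap (s - x) (Or.inr (show a * c ≤ s - x by omega)) (by omega)
  · intro h
    have hs : s ∈ (fun t => a * t) '' S ∪ {y | a * c ≤ y} :=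
      h.elim And.left fun h => Or.inr (show a * c ≤ s by omega)
    refine ⟨hs, fun t ht hst => ?_⟩
    obtain ⟨w, hw, rfl⟩ := exists_lt_eq_mul_of_mem_image_mul_union ht (by omega)
    exact mul_add_notMem_image_mul_union hx hxa hw (hst ▸ hs)

lemma mem_image_mul_union_and_le_iff {d : ℕ} (ha : 0 < a) (hS : ∀ m, d ≤ m → m ∈ S)
    (hdc : d ≤ c) {y : ℕ} :
    y ∈ (fun t => a * t) '' S ∪ {y | a * c ≤ y} ∧ y ≤ a * c
      ↔ ∃ t, (t ∈ S ∧ t ≤ d ∨ d < t ∧ t ≤ c) ∧ y = a * t := by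
  constructor
  · rintro ⟨⟨t, ht, rfl⟩ | hle, hy⟩
    · have htc : t ≤ c := Nat.le_of_mul_le_mul_left hy ha
      exact ⟨t, (le_or_gt t d).imp (⟨ht, ·⟩) (⟨·, htc⟩), rfl⟩
    · refine ⟨c, ?_, le_antisymm hy hle⟩
      exact (le_or_gt c d).imp (fun h => ⟨hS c hdc, h⟩) (⟨·, le_rfl⟩)
  · rintro ⟨t, ⟨ht, htd⟩ | ⟨hdt, htc⟩, rfl⟩
    · exact ⟨Or.inl ⟨t, ht, rfl⟩, Nat.mul_le_mul_left a (htd.trans hdc)⟩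
    · exact ⟨Or.inl ⟨t, hS t hdt.le, rfl⟩, Nat.mul_le_mul_left a htc⟩

end StepSemigroup

section Inductive

variable {a b : ℕ → ℕ}

lemma mem_indSG_of_mul_le {i y : ℕ} (hi : 1 ≤ i) (h : a i * b i ≤ y) : y ∈ IndSG a b i := by
  obtain ⟨j, rfl⟩ := Nat.exists_eq_add_of_le' hi
  exact Or.inr h

/-- `Λᵏ = Aₖ · levelMultipliers a b k`. -/
def levelMultipliers (a b : ℕ → ℕ) (k : ℕ) : Set ℕ :=
  if k = 1 then Set.Iic (b 1) else Set.Ioc (a (k - 1) * b (k - 1)) (b k)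

lemma mem_indSG_and_le_iff {n : ℕ} (ha : ∀ i, 1 ≤ i → i ≤ n → 0 < a i)
    (hb : ∀ i, 1 ≤ i → i + 1 ≤ n → a i * b i ≤ b (i + 1)) {i : ℕ} (hi : 1 ≤ i) (hin : i ≤ n)
    {y : ℕ} :
    y ∈ IndSG a b i ∧ y ≤ a i * b i ↔
      ∃ k, 1 ≤ k ∧ k ≤ i ∧ ∃ m ∈ levelMultipliers a b k, y = (∏ j ∈ Finset.Icc k i, a j) * m := by
  induction i, hi using Nat.le_induction generalizing y with
  | base =>
    change y ∈ (fun t => a 1 * t) '' Set.univ ∪ {y | a 1 * b 1 ≤ y} ∧ _ ↔ _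
    rw [mem_image_mul_union_and_le_iff (ha 1 le_rfl hin) (fun _ _ => Set.mem_univ _)
      (Nat.zero_le _)]
    constructor
    · rintro ⟨t, ht, rfl⟩
      exact ⟨1, le_rfl, le_rfl, t, by simp [levelMultipliers]; omega, by simp [mul_comm]⟩
    · rintro ⟨k, hk1, hk, m, hm, rfl⟩
      obtain rfl : k = 1 := by omega
      simp only [levelMultipliers, if_true, Set.mem_Iic] at hm
      exact ⟨m, by simp only [Set.mem_univ, true_and]; omega, by simp [mul_comm]⟩
  | succ i hi ih =>
    rw [IndSG, mem_image_mul_union_and_le_iff (ha (i + 1) (by omega) hin)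
      (fun m hm => mem_indSG_of_mul_le hi hm) (hb i hi hin)]
    constructor
    · rintro ⟨t, ⟨ht, hti⟩ | ht, rfl⟩
      · obtain ⟨k, hk1, hki, m, hm, rfl⟩ := (ih (by omega)).mp ⟨ht, hti⟩
        exact ⟨k, hk1, by omega, m, hm, by rw [Finset.prod_Icc_succ_top (by omega)]; ring⟩
      · refine ⟨i + 1, by omega, le_rfl, t, ?_, by simp⟩
        simpa [levelMultipliers, show i ≠ 0 by omega] using ht
    · rintro ⟨k, hk1, hki, m, hm, rfl⟩
      rcases hki.lt_or_eq with hki | rfl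
      · refine ⟨(∏ j ∈ Finset.Icc k i, a j) * m,
          Or.inl ((ih (by omega)).mpr ⟨k, hk1, by omega, m, hm, rfl⟩), ?_⟩
        rw [Finset.prod_Icc_succ_top (by omega)]
        ring
      · refine ⟨m, Or.inr ?_, by simp⟩
        simpa [levelMultipliers, show i ≠ 0 by omega] using hm

end Inductive

lemma mem_Λ_iff {n : ℕ} {a b A lam : ℕ → ℕ} {Λ : ℕ → Set ℕ}
    (hb : ∀ i, 1 ≤ i → i + 1 ≤ n → a i * b i ≤ b (i + 1))
    (hA : ∀ i, A i = ∏ j ∈ Finset.Icc i n, a j)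
    (hlam1 : lam 1 = b 1)
    (hlam : ∀ i, 2 ≤ i → i ≤ n → lam i = b i - a (i - 1) * b (i - 1))
    (hΛ1 : Λ 1 = {x | ∃ m, m ≤ lam 1 ∧ x = m * A 1})
    (hΛk : ∀ k, 2 ≤ k → k ≤ n →
      Λ k = {x | ∃ m, 1 ≤ m ∧ m ≤ lam k ∧ x = b (k - 1) * A (k - 1) + m * A k})
    {k : ℕ} (hk1 : 1 ≤ k) (hkn : k ≤ n) {y : ℕ} :
    y ∈ Λ k ↔ ∃ m ∈ levelMultipliers a b k, y = A k * m := by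
  rcases hk1.eq_or_lt with rfl | hk2
  · simp only [hΛ1, hlam1, levelMultipliers, if_true, Set.mem_ofPred_eq, Set.mem_Iic, mul_comm]
  have hA_pred : A (k - 1) = a (k - 1) * A k := by
    rw [hA, hA, ← Finset.mul_prod_Ioc_eq_prod_Icc (by omega), ← Finset.Icc_add_one_left_eq_Ioc,
      Nat.sub_add_cancel hk1]
  have hbk : a (k - 1) * b (k - 1) ≤ b k := by
    simpa [Nat.sub_add_cancel hk1] using hb (k - 1) (by omega) (by omega)
  simp only [hΛk k hk2 hkn, hlam k hk2 hkn, hA_pred, levelMultipliers, if_neg hk2.ne',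
    Set.mem_ofPred_eq, Set.mem_Ioc]
  constructor
  · rintro ⟨m, hm1, hm, rfl⟩
    exact ⟨a (k - 1) * b (k - 1) + m, ⟨by omega, by omega⟩, by ring⟩
  · rintro ⟨m, ⟨hlo, hhi⟩, rfl⟩
    obtain ⟨d, rfl⟩ := Nat.exists_eq_add_of_lt hlo
    exact ⟨d + 1, by omega, by omega, by ring⟩

theorem stmt9_general (n : ℕ) (hn : 1 ≤ n) (a b : ℕ → ℕ)
    (ha : ∀ i, 1 ≤ i → i ≤ n → 2 ≤ a i)
    (hb : ∀ i, 1 ≤ i → i + 1 ≤ n → a i * b i ≤ b (i + 1))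
    (A lam : ℕ → ℕ)
    (hA : ∀ i, A i = ∏ j ∈ Finset.Icc i n, a j)
    (hlam1 : lam 1 = b 1)
    (hlam : ∀ i, 2 ≤ i → i ≤ n → lam i = b i - a (i - 1) * b (i - 1))
    (Λ : ℕ → Set ℕ)
    (hΛ1 : Λ 1 = {x | ∃ m, m ≤ lam 1 ∧ x = m * A 1})
    (hΛk : ∀ k, 2 ≤ k → k ≤ n →
      Λ k = {x | ∃ m, 1 ≤ m ∧ m ≤ lam k ∧ x = b (k - 1) * A (k - 1) + m * A k}) :
    Ap (IndSG a b n) 1 = {y | ∃ k, 1 ≤ k ∧ k ≤ n ∧ y ∈ Λ k}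
    ∧ ∀ x, 1 < x → x < a n →
        Ap (IndSG a b n) x
          = {y | ∃ k, 1 ≤ k ∧ k ≤ n ∧ y ∈ Λ k}
            ∪ {y | a n * b n + 1 ≤ y ∧ y ≤ a n * b n + x - 1} := by
  have hΛ_eq : {y | ∃ k, 1 ≤ k ∧ k ≤ n ∧ y ∈ Λ k} = {y | y ∈ IndSG a b n ∧ y ≤ a n * b n} := by
    ext y
    rw [Set.mem_ofPred_eq, Set.mem_ofPred_eq,
      mem_indSG_and_le_iff (fun i hi hin => (ha i hi hin).trans_lt' two_pos) hb hn le_rfl]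
    refine exists_congr fun k => and_congr_right fun hk1 => and_congr_right fun hkn => ?_
    rw [mem_Λ_iff hb hA hlam1 hlam hΛ1 hΛk hk1 hkn, hA]
  obtain ⟨p, rfl⟩ := Nat.exists_eq_add_of_le' hn
  have hap : ∀ x, 0 < x → x < a (p + 1) → Ap (IndSG a b (p + 1)) x
      = {y | y ∈ IndSG a b (p + 1) ∧ y ≤ a (p + 1) * b (p + 1)}
        ∪ {y | a (p + 1) * b (p + 1) + 1 ≤ y ∧ y ≤ a (p + 1) * b (p + 1) + x - 1} :=
    fun x hx hxa => ap_image_mul_union hx hxa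
  refine ⟨?_, fun x hx hxa => by rw [hΛ_eq, hap x (by omega) hxa]⟩
  rw [hΛ_eq, hap 1 one_pos (ha (p + 1) hn le_rfl), Set.union_eq_left]
  exact fun y ⟨hlo, hhi⟩ => absurd hlo (by omega)

theorem stmt9 (n : ℕ) (hn : 1 ≤ n) (a b : ℕ → ℕ)
    (ha : ∀ i, 1 ≤ i → i ≤ n → 2 ≤ a i)
    (hb1 : 1 ≤ b 1)
    (hb : ∀ i, 1 ≤ i → i + 1 ≤ n → a i * b i ≤ b (i + 1))
    (A lam : ℕ → ℕ)
    (hA : ∀ i, A i = ∏ j ∈ Finset.Icc i n, a j)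
    (hlam1 : lam 1 = b 1)
    (hlam : ∀ i, 2 ≤ i → i ≤ n → lam i = b i - a (i - 1) * b (i - 1))
    (Λ : ℕ → Set ℕ)
    (hΛ1 : Λ 1 = {x | ∃ m, m ≤ lam 1 ∧ x = m * A 1})
    (hΛk : ∀ k, 2 ≤ k → k ≤ n →
      Λ k = {x | ∃ m, 1 ≤ m ∧ m ≤ lam k ∧ x = b (k - 1) * A (k - 1) + m * A k}) :
    Ap (IndSG a b n) 1 = {y | ∃ k, 1 ≤ k ∧ k ≤ n ∧ y ∈ Λ k}
    ∧ ∀ x, 1 < x → x < a n →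
        Ap (IndSG a b n) x
          = {y | ∃ k, 1 ≤ k ∧ k ≤ n ∧ y ∈ Λ k}
            ∪ {y | a n * b n + 1 ≤ y ∧ y ≤ a n * b n + x - 1} :=
  stmt9_general n hn a b ha hb A lam hA hlam1 hlam Λ hΛ1 hΛk
end

section
/- Let k > 0 with kaₙ < A₁. If aₙbₙ − kaₙ ∈ Γₙ, then Ap(Γₙ, kaₙ+1) = Λ¹ ∪ ⋯ ∪ Λⁿ ∪ (1 + (Ap(Γₙ, kaₙ) ∩ Λⁿ⁺¹)). Otherwise, Ap(Γₙ, kaₙ+1) = Λ¹ ∪ ⋯ ∪ Λⁿ ∪ (1 + (Ap(Γₙ, kaₙ) ∩ Λⁿ⁺¹)) ∪ {aₙbₙ + 1}. -/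
/-!
Write `c = aₙbₙ`. Below `c` the semigroup `Γₙ` consists of multiples of `aₙ`; by induction on `n`
(`Γₙ ∩ [0, c] = aₙ · (Γₙ₋₁ ∩ [0, bₙ])`) these small elements are exactly `Λ¹ ∪ ⋯ ∪ Λⁿ`, and every
integer `≥ c` lies in `Γₙ`. Since `aₙ ∤ 1`, no small element minus `kaₙ + 1` is small, so all of them
lie in `Ap(Γₙ, kaₙ + 1)`. The element `c + 1` lies in it iff `c - kaₙ ∉ Γₙ`, and `1 + y` with
`y > c` lies in it iff `y ∈ Ap(Γₙ, kaₙ)`.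
-/

section Apery

variable {Γ : Set ℕ} {c d x : ℕ}

theorem mem_Ap_add_one_of_le (hdvd : ∀ s ∈ Γ, s ≤ c → d ∣ s) (hd : d ≠ 1) (hxd : d ∣ x)
    {s : ℕ} (hs : s ∈ Γ) (hsc : s ≤ c) : s ∈ Ap Γ (x + 1) := by
  refine ⟨hs, fun t ht hst => hd (Nat.dvd_one.1 ?_)⟩
  have hdt : d ∣ t + x := (hdvd t ht (by omega)).add hxd
  have hds : d ∣ s := hdvd s hs hsc
  rw [hst, ← add_assoc] at hds
  exact (Nat.dvd_add_right hdt).1 hds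

theorem add_one_mem_Ap_add_one_iff (hc : c + 1 ∈ Γ) (hxc : x ≤ c) :
    c + 1 ∈ Ap Γ (x + 1) ↔ c - x ∉ Γ := by
  constructor
  · exact fun h hcx => h.2 _ hcx (by omega)
  · intro h
    refine ⟨hc, fun t ht hct => h ?_⟩
    rwa [show c - x = t by omega]

theorem one_add_mem_Ap_add_one_iff {y : ℕ} (hy : y ∈ Γ) (hy' : 1 + y ∈ Γ) :
    1 + y ∈ Ap Γ (x + 1) ↔ y ∈ Ap Γ x := by
  constructor
  · exact fun h => ⟨hy, fun t ht hyt => h.2 t ht (by omega)⟩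
  · exact fun h => ⟨hy', fun t ht hyt => h.2 t ht (by omega)⟩

theorem Ap_add_one_eq (hge : ∀ s, c ≤ s → s ∈ Γ) (hdvd : ∀ s ∈ Γ, s ≤ c → d ∣ s) (hd : d ≠ 1)
    (hxd : d ∣ x) (hxc : x ≤ c) :
    Ap Γ (x + 1) = {s | s ∈ Γ ∧ s ≤ c} ∪ (fun y => 1 + y) '' (Ap Γ x ∩ {y | c + 1 ≤ y})
      ∪ {s | s = c + 1 ∧ c - x ∉ Γ} := by
  have hc : c + 1 ∈ Γ := hge _ (by omega)
  ext s
  simp only [Set.mem_union, Set.mem_image, Set.mem_inter_iff, Set.mem_ofPred_eq]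
  constructor
  · intro hs
    rcases (by omega : s ≤ c ∨ s = c + 1 ∨ c + 2 ≤ s) with hsc | rfl | hsc
    · exact Or.inl (Or.inl ⟨hs.1, hsc⟩)
    · exact Or.inr ⟨rfl, (add_one_mem_Ap_add_one_iff hc hxc).1 hs⟩
    · obtain ⟨y, rfl⟩ : ∃ y, s = 1 + y := ⟨s - 1, by omega⟩
      refine Or.inl (Or.inr ⟨y, ⟨?_, by omega⟩, rfl⟩)
      exact (one_add_mem_Ap_add_one_iff (hge y (by omega)) hs.1).1 hs
  · rintro ((⟨hs, hsc⟩ | ⟨y, ⟨hy, hcy⟩, rfl⟩) | ⟨rfl, hcx⟩)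
    · exact mem_Ap_add_one_of_le hdvd hd hxd hs hsc
    · exact (one_add_mem_Ap_add_one_iff hy.1 (hge _ (by omega))).2 hy
    · exact (add_one_mem_Ap_add_one_iff hc hxc).2 hcx

end Apery

section InductiveSemigroup

variable {a b : ℕ → ℕ}

theorem mem_indSG_of_le {n s : ℕ} (hn : 0 < n) (hs : a n * b n ≤ s) : s ∈ IndSG a b n := by
  obtain ⟨m, rfl⟩ := Nat.exists_eq_add_one.2 hn
  exact Or.inr hs

theorem dvd_of_mem_indSG_of_le {n s : ℕ} (hn : 0 < n) (hs : s ∈ IndSG a b n)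
    (hsc : s ≤ a n * b n) : a n ∣ s := by
  obtain ⟨m, rfl⟩ := Nat.exists_eq_add_one.2 hn
  rcases hs with ⟨x, -, rfl⟩ | hs
  · exact dvd_mul_right _ _
  · rw [le_antisymm hsc hs]
    exact dvd_mul_right _ _

theorem mem_indSG_succ_and_le_iff {n s : ℕ} (ha : 0 < a (n + 1)) (hb : b (n + 1) ∈ IndSG a b n) :
    s ∈ IndSG a b (n + 1) ∧ s ≤ a (n + 1) * b (n + 1) ↔
      ∃ x, (x ∈ IndSG a b n ∧ x ≤ b (n + 1)) ∧ s = a (n + 1) * x := by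
  constructor
  · rintro ⟨⟨x, hx, rfl⟩ | hs, hsc⟩
    · exact ⟨x, ⟨hx, Nat.le_of_mul_le_mul_left hsc ha⟩, rfl⟩
    · exact ⟨b (n + 1), ⟨hb, le_rfl⟩, le_antisymm hsc hs⟩
  · rintro ⟨x, ⟨hx, hxb⟩, rfl⟩
    exact ⟨Or.inl ⟨x, hx, rfl⟩, Nat.mul_le_mul_left _ hxb⟩

/-- `Λˡ` for `1 ≤ l ≤ n`, written as the multiples of `Aₗ` with multiplier in
`(aₗ₋₁bₗ₋₁, bₗ]` (in `[0, b₁]` for `l = 1`), which avoids truncated subtraction. -/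
def indBlock (a b : ℕ → ℕ) (n l : ℕ) : Set ℕ :=
  {s | ∃ m, (l = 1 ∨ a (l - 1) * b (l - 1) < m) ∧ m ≤ b l ∧ s = m * ∏ j ∈ Finset.Icc l n, a j}

theorem mem_indBlock_succ {n l s : ℕ} (hl : l ≤ n + 1) :
    s ∈ indBlock a b (n + 1) l ↔ ∃ x ∈ indBlock a b n l, s = a (n + 1) * x := by
  simp only [indBlock, Set.mem_ofPred_eq, Finset.prod_Icc_succ_top hl]
  constructor
  · rintro ⟨m, hm, hmb, rfl⟩
    exact ⟨_, ⟨m, hm, hmb, rfl⟩, by ring⟩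
  · rintro ⟨_, ⟨m, hm, hmb, rfl⟩, rfl⟩
    exact ⟨m, hm, hmb, by ring⟩

theorem mem_indBlock_succ_self {n x : ℕ} :
    x ∈ indBlock a b n (n + 1) ↔ (n = 0 ∨ a n * b n < x) ∧ x ≤ b (n + 1) := by
  simp [indBlock]

theorem exists_indBlock_succ_iff {n s : ℕ} :
    (∃ l, 1 ≤ l ∧ l ≤ n + 1 ∧ s ∈ indBlock a b (n + 1) l) ↔
      ∃ x, (∃ l, 1 ≤ l ∧ l ≤ n + 1 ∧ x ∈ indBlock a b n l) ∧ s = a (n + 1) * x := by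
  constructor
  · rintro ⟨l, hl1, hl, hs⟩
    obtain ⟨x, hx, rfl⟩ := (mem_indBlock_succ hl).1 hs
    exact ⟨x, ⟨l, hl1, hl, hx⟩, rfl⟩
  · rintro ⟨x, ⟨l, hl1, hl, hx⟩, rfl⟩
    exact ⟨l, hl1, hl, (mem_indBlock_succ hl).2 ⟨x, hx, rfl⟩⟩

theorem mem_indSG_and_le_iff_s10 {n : ℕ} (hn : 0 < n) (ha : ∀ i, 1 ≤ i → i ≤ n → 0 < a i)
    (hb : ∀ i, 1 ≤ i → i + 1 ≤ n → a i * b i ≤ b (i + 1)) (s : ℕ) :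
    s ∈ IndSG a b n ∧ s ≤ a n * b n ↔ ∃ l, 1 ≤ l ∧ l ≤ n ∧ s ∈ indBlock a b n l := by
  induction n, hn using Nat.le_induction generalizing s with
  | base =>
    rw [exists_indBlock_succ_iff, mem_indSG_succ_and_le_iff (ha 1 le_rfl le_rfl) (Set.mem_univ _)]
    have hl : ∀ l, 1 ≤ l ∧ l ≤ 0 + 1 ↔ l = 1 := by omega
    simp [← and_assoc (a := 1 ≤ _), hl, mem_indBlock_succ_self, IndSG]
  | succ n hn ih =>
    have ih := ih (fun i hi hin => ha i hi (by omega)) (fun i hi hin => hb i hi (by omega))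
    have hbn : a n * b n ≤ b (n + 1) := hb n hn le_rfl
    rw [exists_indBlock_succ_iff,
      mem_indSG_succ_and_le_iff (ha _ (by omega) le_rfl) (mem_indSG_of_le hn hbn)]
    suffices hsplit : ∀ x, x ∈ IndSG a b n ∧ x ≤ b (n + 1) ↔
        ∃ l, 1 ≤ l ∧ l ≤ n + 1 ∧ x ∈ indBlock a b n l by
      simp only [hsplit]
    intro x
    constructor
    · rintro ⟨hx, hxb⟩
      by_cases hxc : x ≤ a n * b n
      · obtain ⟨l, hl1, hl, hxl⟩ := (ih x).1 ⟨hx, hxc⟩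
        exact ⟨l, hl1, by omega, hxl⟩
      · exact ⟨n + 1, by omega, le_rfl, mem_indBlock_succ_self.2 ⟨Or.inr (by omega), hxb⟩⟩
    · rintro ⟨l, hl1, hl, hxl⟩
      rcases hl.lt_or_eq with hl | rfl
      · obtain ⟨hx, hxc⟩ := (ih x).2 ⟨l, hl1, by omega, hxl⟩
        exact ⟨hx, hxc.trans hbn⟩
      · obtain ⟨hxc, hxb⟩ := mem_indBlock_succ_self.1 hxl
        exact ⟨mem_indSG_of_le hn (by omega), hxb⟩

theorem indBlock_eq_of_two_le {n l : ℕ} (hl : 2 ≤ l) (hln : l ≤ n) :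
    indBlock a b n l = {x | ∃ m, 1 ≤ m ∧ m ≤ b l - a (l - 1) * b (l - 1) ∧
      x = b (l - 1) * ∏ j ∈ Finset.Icc (l - 1) n, a j + m * ∏ j ∈ Finset.Icc l n, a j} := by
  obtain ⟨l, rfl⟩ : ∃ l', l = l' + 1 := ⟨l - 1, by omega⟩
  simp only [indBlock, Nat.add_sub_cancel, ← Finset.mul_prod_Ioc_eq_prod_Icc (by omega : l ≤ n),
    Finset.Icc_add_one_left_eq_Ioc]
  ext x
  constructor
  · rintro ⟨m, hm, hmb, rfl⟩
    obtain ⟨d, rfl⟩ := Nat.exists_eq_add_of_lt (hm.resolve_left (by omega))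
    exact ⟨d + 1, by omega, by omega, by ring⟩
  · rintro ⟨m, hm1, hmb, rfl⟩
    exact ⟨a l * b l + m, Or.inr (by omega), by omega, by ring⟩

end InductiveSemigroup

theorem stmt10_general (n : ℕ) (hn : 1 ≤ n) (a b : ℕ → ℕ)
    (ha : ∀ i, 1 ≤ i → i ≤ n → 2 ≤ a i)
    (hb1 : 1 ≤ b 1)
    (hb : ∀ i, 1 ≤ i → i + 1 ≤ n → a i * b i ≤ b (i + 1))
    (A lam : ℕ → ℕ)
    (hA : ∀ i, A i = ∏ j ∈ Finset.Icc i n, a j)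
    (hlam1 : lam 1 = b 1)
    (hlam : ∀ i, 2 ≤ i → i ≤ n → lam i = b i - a (i - 1) * b (i - 1))
    (Λ : ℕ → Set ℕ)
    (hΛ1 : Λ 1 = {x | ∃ m, m ≤ lam 1 ∧ x = m * A 1})
    (hΛk : ∀ k, 2 ≤ k → k ≤ n →
      Λ k = {x | ∃ m, 1 ≤ m ∧ m ≤ lam k ∧ x = b (k - 1) * A (k - 1) + m * A k})
    (hΛn1 : Λ (n + 1) = {x | a n * b n + 1 ≤ x})
    (k : ℕ) (hkA : k * a n < A 1) :
    (a n * b n - k * a n ∈ IndSG a b n →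
      Ap (IndSG a b n) (k * a n + 1)
        = {y | ∃ l, 1 ≤ l ∧ l ≤ n ∧ y ∈ Λ l}
          ∪ (fun y => 1 + y) '' (Ap (IndSG a b n) (k * a n) ∩ Λ (n + 1)))
    ∧ (a n * b n - k * a n ∉ IndSG a b n →
      Ap (IndSG a b n) (k * a n + 1)
        = {y | ∃ l, 1 ≤ l ∧ l ≤ n ∧ y ∈ Λ l}
          ∪ (fun y => 1 + y) '' (Ap (IndSG a b n) (k * a n) ∩ Λ (n + 1))
          ∪ {a n * b n + 1}) := by
  have hΛ : ∀ l, 1 ≤ l → l ≤ n → Λ l = indBlock a b n l := by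
    intro l hl1 hln
    rcases hl1.eq_or_lt with rfl | hl2
    · simp [hΛ1, hlam1, hA, indBlock]
    · rw [hΛk l hl2 hln, hlam l hl2 hln, hA, hA, indBlock_eq_of_two_le hl2 hln]
  have hsmall : {y | ∃ l, 1 ≤ l ∧ l ≤ n ∧ y ∈ Λ l} = {s | s ∈ IndSG a b n ∧ s ≤ a n * b n} := by
    ext s
    rw [Set.mem_ofPred_eq, Set.mem_ofPred_eq,
      mem_indSG_and_le_iff_s10 hn (fun i hi hin => by have := ha i hi hin; omega) hb]
    exact exists_congr fun l => and_congr_right fun hl1 => and_congr_right fun hln => by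
      rw [hΛ l hl1 hln]
  have hA1 : A 1 ≤ a n * b n :=
    (hsmall.subset ⟨1, le_rfl, hn, hΛ1 ▸ ⟨1, hlam1 ▸ hb1, (one_mul _).symm⟩⟩).2
  have han : 2 ≤ a n := ha n hn le_rfl
  rw [Ap_add_one_eq (fun s => mem_indSG_of_le hn) (fun s => dvd_of_mem_indSG_of_le hn) (by omega)
    (dvd_mul_left _ _) (by omega), hsmall, hΛn1]
  constructor <;> intro h <;> simp [h]

theorem stmt10 (n : ℕ) (hn : 1 ≤ n) (a b : ℕ → ℕ)
    (ha : ∀ i, 1 ≤ i → i ≤ n → 2 ≤ a i)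
    (hb1 : 1 ≤ b 1)
    (hb : ∀ i, 1 ≤ i → i + 1 ≤ n → a i * b i ≤ b (i + 1))
    (A lam : ℕ → ℕ)
    (hA : ∀ i, A i = ∏ j ∈ Finset.Icc i n, a j)
    (hlam1 : lam 1 = b 1)
    (hlam : ∀ i, 2 ≤ i → i ≤ n → lam i = b i - a (i - 1) * b (i - 1))
    (Λ : ℕ → Set ℕ)
    (hΛ1 : Λ 1 = {x | ∃ m, m ≤ lam 1 ∧ x = m * A 1})
    (hΛk : ∀ k, 2 ≤ k → k ≤ n →
      Λ k = {x | ∃ m, 1 ≤ m ∧ m ≤ lam k ∧ x = b (k - 1) * A (k - 1) + m * A k})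
    (hΛn1 : Λ (n + 1) = {x | a n * b n + 1 ≤ x})
    (k : ℕ) (hk0 : 0 < k) (hkA : k * a n < A 1) :
    (a n * b n - k * a n ∈ IndSG a b n →
      Ap (IndSG a b n) (k * a n + 1)
        = {y | ∃ l, 1 ≤ l ∧ l ≤ n ∧ y ∈ Λ l}
          ∪ (fun y => 1 + y) '' (Ap (IndSG a b n) (k * a n) ∩ Λ (n + 1)))
    ∧ (a n * b n - k * a n ∉ IndSG a b n →
      Ap (IndSG a b n) (k * a n + 1)
        = {y | ∃ l, 1 ≤ l ∧ l ≤ n ∧ y ∈ Λ l}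
          ∪ (fun y => 1 + y) '' (Ap (IndSG a b n) (k * a n) ∩ Λ (n + 1))
          ∪ {a n * b n + 1}) :=
  stmt10_general n hn a b ha hb1 hb A lam hA hlam1 hlam Λ hΛ1 hΛk hΛn1 k hkA
end

section
/- The genus of Γₙ, i.e., the cardinality of ℕ ∖ Γₙ, equals Σ_{i=1}^{n} bᵢ(aᵢ − 1). -/
/-!
The gaps of `A·Γ ∪ (AB + ℕ)`, when all gaps of `Γ` lie below `B`, are the `A`-fold multiples
of the gaps of `Γ` together with the `B(A - 1)` non-multiples of `A` below `AB`. So each step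
`Γᵢ₋₁ ↝ Γᵢ` adds `bᵢ(aᵢ - 1)` gaps, the hypothesis `aᵢ₋₁bᵢ₋₁ ≤ bᵢ` guaranteeing that all gaps
of `Γᵢ₋₁` (which lie below `aᵢ₋₁bᵢ₋₁`) lie below `bᵢ`.
-/

open Set

namespace Nat

theorem ncard_Iio_mul_sdiff_range_mul {A : ℕ} (hA : 0 < A) (B : ℕ) :
    (Iio (A * B) \ range (A * ·)).ncard = B * (A - 1) := by
  have hmultiples : Iio (A * B) ∩ range (A * ·) = (A * ·) '' Iio B := by
    ext x
    simp only [mem_inter_iff, mem_Iio, mem_range, mem_image]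
    constructor
    · rintro ⟨hx, y, rfl⟩
      exact ⟨y, Nat.lt_of_mul_lt_mul_left hx, rfl⟩
    · rintro ⟨y, hy, rfl⟩
      exact ⟨Nat.mul_lt_mul_of_pos_left hy hA, y, rfl⟩
  rw [← sdiff_inter_self_eq_sdiff, inter_comm, ncard_sdiff inter_subset_left, hmultiples,
    ncard_image_of_injective _ (mul_right_injective₀ hA.ne'), ncard_Iio_nat, ncard_Iio_nat,
    Nat.mul_sub_one, mul_comm]

variable {A B : ℕ} {Γ : Set ℕ}

theorem compl_image_mul_union_setOf_le (hA : 0 < A) (hΓ : Γᶜ ⊆ Iio B) :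
    ((A * ·) '' Γ ∪ {x | A * B ≤ x})ᶜ = (A * ·) '' Γᶜ ∪ (Iio (A * B) \ range (A * ·)) := by
  ext x
  simp only [mem_compl_iff, mem_union, mem_image, mem_ofPred_eq, mem_sdiff, mem_Iio, mem_range,
    not_or, not_le, not_exists, not_and]
  constructor
  · rintro ⟨hΓx, hx⟩
    by_cases hdvd : ∃ y, A * y = x
    · obtain ⟨y, rfl⟩ := hdvd
      exact Or.inl ⟨y, fun hy => hΓx y hy rfl, rfl⟩
    · exact Or.inr ⟨hx, fun y hy => hdvd ⟨y, hy⟩⟩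
  · rintro (⟨y, hy, rfl⟩ | ⟨hx, hndvd⟩)
    · refine ⟨fun z hz hzy => hy ?_, Nat.mul_lt_mul_of_pos_left (hΓ hy) hA⟩
      rwa [← mul_left_cancel₀ hA.ne' hzy]
    · exact ⟨fun z _ => hndvd z, hx⟩

theorem ncard_compl_image_mul_union_setOf_le (hA : 0 < A) (hΓ : Γᶜ ⊆ Iio B) :
    ((A * ·) '' Γ ∪ {x | A * B ≤ x})ᶜ.ncard = Γᶜ.ncard + B * (A - 1) := by
  have hdisj : Disjoint ((A * ·) '' Γᶜ) (Iio (A * B) \ range (A * ·)) :=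
    disjoint_left.2 fun _ ⟨y, _, hy⟩ hx => hx.2 ⟨y, hy⟩
  rw [compl_image_mul_union_setOf_le hA hΓ,
    ncard_union_eq hdisj (((finite_Iio B).subset hΓ).image _) ((finite_Iio _).sdiff),
    ncard_image_of_injective _ (mul_right_injective₀ hA.ne'), ncard_Iio_mul_sdiff_range_mul hA]

end Nat

theorem compl_IndSG_succ_subset_Iio (a b : ℕ → ℕ) (i : ℕ) :
    (IndSG a b (i + 1))ᶜ ⊆ Iio (a (i + 1) * b (i + 1)) :=
  fun _ hx => mem_Iio.2 (lt_of_not_ge fun hle => hx (Or.inr hle))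

theorem ncard_compl_IndSG (n : ℕ) (a b : ℕ → ℕ) (ha : ∀ i, 1 ≤ i → i ≤ n → 0 < a i)
    (hb : ∀ i, 1 ≤ i → i + 1 ≤ n → a i * b i ≤ b (i + 1)) :
    ((IndSG a b n)ᶜ).ncard = ∑ i ∈ Finset.Icc 1 n, b i * (a i - 1) := by
  induction n with
  | zero => simp [IndSG]
  | succ n ih =>
    have hgaps : (IndSG a b n)ᶜ ⊆ Iio (b (n + 1)) := by
      cases n with
      | zero => simp [IndSG]
      | succ m =>
        exact (compl_IndSG_succ_subset_Iio a b m).trans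
          (Iio_subset_Iio (hb (m + 1) (by omega) le_rfl))
    rw [IndSG, Nat.ncard_compl_image_mul_union_setOf_le (ha _ (by omega) le_rfl) hgaps,
      ih (fun i hi hin => ha i hi (by omega)) (fun i hi hin => hb i hi (by omega)),
      Finset.sum_Icc_succ_top (by omega)]

theorem stmt11_general (n : ℕ) (a b : ℕ → ℕ)
    (ha : ∀ i, 1 ≤ i → i ≤ n → 2 ≤ a i)
    (hb : ∀ i, 1 ≤ i → i + 1 ≤ n → a i * b i ≤ b (i + 1)) :
    ((IndSG a b n)ᶜ).ncard = ∑ i ∈ Finset.Icc 1 n, b i * (a i - 1) :=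
  ncard_compl_IndSG n a b (fun i hi hin => zero_lt_two.trans_le (ha i hi hin)) hb

/-- The genus of Γₙ equals `Σ_{i=1}^n bᵢ(aᵢ - 1)`. -/
theorem stmt11 (n : ℕ) (hn : 1 ≤ n) (a b : ℕ → ℕ)
    (ha : ∀ i, 1 ≤ i → i ≤ n → 2 ≤ a i)
    (hb1 : 1 ≤ b 1)
    (hb : ∀ i, 1 ≤ i → i + 1 ≤ n → a i * b i ≤ b (i + 1)) :
    ((IndSG a b n)ᶜ).ncard = ∑ i ∈ Finset.Icc 1 n, b i * (a i - 1) :=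
  stmt11_general n a b ha hb
end

section
/- Let n ≥ 2 and write n = 2m + β with β ∈ {0,1}. Then for the tower semigroup Γₙ: (1) #Ap(Γₙ, q^{n−1}) = q^{n−1}; (2) #Ap(Γₙ, 1) = q^{⌊n/2⌋}; (3) if n = 2m, then for every i ∈ {1, …, n−2}, #Ap(Γₙ, q^i) = (q^{⌊m − i/2⌋} − 1) + q^i; (4) if n = 2m+1, then for every i ∈ {1, …, n−2}, #Ap(Γₙ, q^i) = (q^{⌈m − i/2⌉} − 1) + q^i. -/
/-- The conductor `cₙ` of the Garcia–Stichtenoth tower semigroups: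
`cₙ = qⁿ - q^((n+1)/2)` if `n` is odd, `cₙ = qⁿ - q^(n/2)` if `n` is even. -/
def cGS (q n : ℕ) : ℕ := if n % 2 = 1 then q ^ n - q ^ ((n + 1) / 2) else q ^ n - q ^ (n / 2)

/-- The Weierstrass semigroups of the Garcia–Stichtenoth tower:
Γ₁ = ℕ and Γₙ = q·Γ_{n-1} ∪ (cₙ + ℕ) for n ≥ 2. -/
def GST (q : ℕ) : ℕ → Set ℕ
  | 0 => Set.univ
  | 1 => Set.univ
  | n + 2 => (fun x => q * x) '' GST q (n + 1) ∪ {x | cGS q (n + 2) ≤ x}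

/-!
Below `cₙ₊₂ = q·(q^(n+1) - q^⌊(n+1)/2⌋)` the semigroup `Γₙ₊₂` consists of multiples
of `q`, and `q·y ∈ Γₙ₊₂ ↔ y ∈ Γₙ₊₁`; so `Γₙ₊₂ ∩ [0, cₙ₊₂]` is `q` times `Γₙ₊₁ ∩ [0, cₙ₊₂/q]`,
and since `Γₙ₊₁` contains everything from `cₙ₊₁` on, `#(Γₙ ∩ [0, cₙ]) = q^⌊n/2⌋` by induction.
That set is `Ap(Γₙ, 1)`, because two consecutive integers cannot both be multiples of `q`.

For `M = q^i` with `i ≤ n`, the Apéry set `Ap(Γₙ, M)` splits by divisibility by `M`. Its multiples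
of `M` are `M·Ap(Γₙ₋ᵢ, 1)`. On the other hand `Γₙ` is closed under adding `M` to a non-multiple
of `M`, so every nonzero residue class mod `M` meets `Ap(Γₙ, M)` exactly in its least element
of `Γₙ`. Hence `#Ap(Γₙ, q^i) = q^⌊(n-i)/2⌋ + q^i - 1`, which specializes to all four claims.
-/

open Set

section Apery

variable {Γ Γ' : Set ℕ} {x c : ℕ}

theorem ap_finite (hc : ∀ s, c ≤ s → s ∈ Γ) : (Ap Γ x).Finite := by
  refine (finite_Iio (c + x)).subset fun s ⟨_, hs⟩ => mem_Iio.mpr <| not_le.mp fun h =>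
    hs (s - x) (hc _ (by omega)) (by omega)

theorem add_mul_mem_of_not_dvd (hadd : ∀ s ∈ Γ, ¬ x ∣ s → s + x ∈ Γ) {s : ℕ} (hs : s ∈ Γ)
    (hxs : ¬ x ∣ s) (j : ℕ) : s + j * x ∈ Γ := by
  induction j with
  | zero => simpa using hs
  | succ j ih =>
    rw [add_mul, one_mul, ← add_assoc]
    exact hadd _ ih (by rwa [Nat.dvd_add_left (dvd_mul_left x j)])

theorem eq_of_mem_ap_of_mod_eq (hadd : ∀ s ∈ Γ, ¬ x ∣ s → s + x ∈ Γ) {s s' : ℕ}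
    (hs : s ∈ Ap Γ x) (hs' : s' ∈ Ap Γ x) (hxs : ¬ x ∣ s) (hle : s ≤ s')
    (hmod : s % x = s' % x) : s = s' := by
  obtain ⟨j, hj⟩ := (Nat.modEq_iff_dvd' hle).mp hmod
  cases j with
  | zero => omega
  | succ j =>
    exact absurd (add_mul_mem_of_not_dvd hadd hs.1 hxs j) fun h =>
      hs'.2 _ h (by rw [mul_add, mul_one, mul_comm] at hj; omega)

theorem ncard_ap_diff_dvd (hx : 0 < x) (hc : ∀ s, c ≤ s → s ∈ Γ)
    (hadd : ∀ s ∈ Γ, ¬ x ∣ s → s + x ∈ Γ) : (Ap Γ x \ {s | x ∣ s}).ncard = x - 1 := by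
  have hbij : BijOn (· % x) (Ap Γ x \ {s | x ∣ s}) (Ioo 0 x) := by
    refine ⟨fun s ⟨_, hxs⟩ => ⟨Nat.pos_of_ne_zero fun h => hxs (Nat.dvd_of_mod_eq_zero h),
      Nat.mod_lt s hx⟩, fun s ⟨hs, hxs⟩ s' ⟨hs', hxs'⟩ hmod => ?_, fun r ⟨hr0, hrx⟩ => ?_⟩
    · rcases le_total s s' with hle | hle
      · exact eq_of_mem_ap_of_mod_eq hadd hs hs' hxs hle hmod
      · exact (eq_of_mem_ap_of_mod_eq hadd hs' hs hxs' hle hmod.symm).symm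
    · classical
      have hex : ∃ s, s ∈ Γ ∧ s % x = r :=
        ⟨c * x + r, hc _ (by nlinarith), by rw [Nat.mul_add_mod_self_right, Nat.mod_eq_of_lt hrx]⟩
      obtain ⟨hmem, hmod⟩ := Nat.find_spec hex
      refine ⟨Nat.find hex, ⟨⟨hmem, fun t ht heq => ?_⟩, fun h => ?_⟩, hmod⟩
      · exact Nat.find_min hex (by omega) ⟨ht, by rw [← hmod, heq, Nat.add_mod_right]⟩
      · rw [Nat.mod_eq_zero_of_dvd h] at hmod
        omega
  rw [hbij.ncard_eq, ncard_Ioo_nat, Nat.sub_zero]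

theorem ap_inter_dvd_eq_image (hx : 0 < x) (hscale : ∀ y, x * y ∈ Γ ↔ y ∈ Γ') :
    Ap Γ x ∩ {s | x ∣ s} = (x * ·) '' Ap Γ' 1 := by
  ext s
  constructor
  · rintro ⟨⟨hs, hap⟩, y, rfl⟩
    exact ⟨y, ⟨(hscale y).mp hs, fun t ht hyt => hap _ ((hscale t).mpr ht) (by rw [hyt]; ring)⟩,
      rfl⟩
  · rintro ⟨y, ⟨hy, hap⟩, rfl⟩
    refine ⟨⟨(hscale y).mpr hy, fun t ht hyt => ?_⟩, dvd_mul_right x y⟩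
    obtain ⟨u, rfl⟩ : x ∣ t := (Nat.dvd_add_left (dvd_refl x)).mp (hyt ▸ dvd_mul_right x y)
    exact hap u ((hscale u).mp ht) (Nat.eq_of_mul_eq_mul_left hx (by rw [mul_add_one]; exact hyt))

theorem ncard_ap_eq_ncard_ap_one_add (hx : 0 < x) (hc : ∀ s, c ≤ s → s ∈ Γ)
    (hadd : ∀ s ∈ Γ, ¬ x ∣ s → s + x ∈ Γ) (hscale : ∀ y, x * y ∈ Γ ↔ y ∈ Γ') :
    (Ap Γ x).ncard = (Ap Γ' 1).ncard + (x - 1) := by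
  rw [← ncard_inter_add_ncard_sdiff_eq_ncard (Ap Γ x) {s | x ∣ s} (ap_finite hc),
    ap_inter_dvd_eq_image hx hscale, ncard_image_of_injective _ (mul_right_injective₀ hx.ne'),
    ncard_ap_diff_dvd hx hc hadd]

theorem ncard_inter_Iic_eq_add {d : ℕ} (hc : ∀ s, c ≤ s → s ∈ Γ) (hcd : c ≤ d) :
    (Γ ∩ Iic d).ncard = (Γ ∩ Iic c).ncard + (d - c) := by
  have hsplit : Γ ∩ Iic d = (Γ ∩ Iic c) ∪ Ioc c d := by
    ext s
    simp only [mem_union, mem_inter_iff, mem_Iic, mem_Ioc]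
    constructor
    · rintro ⟨hs, hsd⟩
      exact (le_or_gt s c).imp (⟨hs, ·⟩) (⟨·, hsd⟩)
    · rintro (⟨hs, hsc⟩ | ⟨hcs, hsd⟩)
      exacts [⟨hs, hsc.trans hcd⟩, ⟨hc s hcs.le, hsd⟩]
  rw [hsplit, ncard_union_eq (disjoint_left.mpr fun s hs hs' => not_lt.mpr hs.2 hs'.1)
    ((finite_Iic c).inter_of_right Γ) (finite_Ioc c d), ncard_Ioc_nat]

end Apery

section GarciaStichtenoth

variable {q : ℕ}

theorem cGS_eq (q n : ℕ) : cGS q n = q ^ n - q ^ ((n + 1) / 2) := by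
  unfold cGS
  split_ifs with h
  · rfl
  · rw [show (n + 1) / 2 = n / 2 by omega]

theorem cGS_add_two (q n : ℕ) : cGS q (n + 2) = q * (q ^ (n + 1) - q ^ ((n + 1) / 2)) := by
  rw [cGS_eq, Nat.mul_sub, ← pow_succ', ← pow_succ',
    show (n + 2 + 1) / 2 = (n + 1) / 2 + 1 by omega]

theorem cGS_succ_le (hq : 0 < q) (n : ℕ) : cGS q (n + 1) ≤ q ^ (n + 1) - q ^ ((n + 1) / 2) :=
  cGS_eq q (n + 1) ▸ Nat.sub_le_sub_left (Nat.pow_le_pow_right hq (by omega)) _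

theorem mem_gst_of_cGS_le (q : ℕ) {n s : ℕ} (h : cGS q n ≤ s) : s ∈ GST q n :=
  match n with
  | 0 | 1 => trivial
  | _ + 2 => Or.inr h

theorem mul_mem_gst_succ_iff (hq : 0 < q) (n y : ℕ) : q * y ∈ GST q (n + 1) ↔ y ∈ GST q n := by
  cases n with
  | zero => exact iff_of_true trivial trivial
  | succ n =>
    refine ⟨?_, fun h => Or.inl ⟨y, h, rfl⟩⟩
    rintro (⟨z, hz, hzy⟩ | h)
    · rwa [← Nat.eq_of_mul_eq_mul_left hq hzy]
    · rw [cGS_add_two] at h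
      exact mem_gst_of_cGS_le q ((cGS_succ_le hq n).trans (Nat.le_of_mul_le_mul_left h hq))

theorem pow_mul_mem_gst_iff (hq : 0 < q) {i n : ℕ} (hi : i ≤ n) (y : ℕ) :
    q ^ i * y ∈ GST q n ↔ y ∈ GST q (n - i) := by
  induction i generalizing n with
  | zero => simp
  | succ i ih =>
    obtain ⟨m, rfl⟩ : ∃ m, n = m + 1 := ⟨n - 1, by omega⟩
    rw [pow_succ', mul_assoc, mul_mem_gst_succ_iff hq, ih (by omega), Nat.add_sub_add_right]

theorem add_pow_mem_gst (q : ℕ) {n i s : ℕ} (hs : s ∈ GST q n) (hsi : ¬ q ^ i ∣ s) :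
    s + q ^ i ∈ GST q n :=
  match n, i, hs with
  | 0, _, _ | 1, _, _ => trivial
  | _ + 2, 0, _ => absurd (one_dvd s) (by simp at hsi)
  | _ + 2, i + 1, Or.inl ⟨y, hy, hys⟩ => by
    subst hys
    rw [pow_succ', ← mul_add]
    exact Or.inl ⟨_, add_pow_mem_gst q hy fun h => hsi (pow_succ' q i ▸ mul_dvd_mul_left q h), rfl⟩
  | _ + 2, _ + 1, Or.inr h => Or.inr (le_add_right h : cGS q _ ≤ _)

theorem dvd_of_mem_gst_of_le_cGS {n s : ℕ} (hs : s ∈ GST q (n + 2)) (hsc : s ≤ cGS q (n + 2)) :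
    q ∣ s := by
  rcases hs with ⟨y, -, rfl⟩ | hs
  · exact dvd_mul_right q y
  · rw [le_antisymm hsc hs, cGS_add_two]
    exact dvd_mul_right _ _

theorem ap_gst_one (hq : 1 < q) (n : ℕ) : Ap (GST q n) 1 = GST q n ∩ Iic (cGS q n) := by
  ext s
  constructor
  · rintro ⟨hs, hap⟩
    exact ⟨hs, mem_Iic.mpr <| not_lt.mp fun h =>
      hap (s - 1) (mem_gst_of_cGS_le q (by omega)) (by omega)⟩
  · rintro ⟨hs, hsc⟩
    refine ⟨hs, fun t ht hst => ?_⟩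
    match n with
    | 0 | 1 => simp [cGS] at hsc; omega
    | n + 2 =>
      have hqt := dvd_of_mem_gst_of_le_cGS ht (by rw [mem_Iic] at hsc; omega)
      have hqs := dvd_of_mem_gst_of_le_cGS hs hsc
      rw [hst, Nat.dvd_add_right hqt, Nat.dvd_one] at hqs
      omega

theorem gst_inter_Iic_cGS_add_two (hq : 0 < q) (n : ℕ) :
    GST q (n + 2) ∩ Iic (cGS q (n + 2)) =
      (q * ·) '' (GST q (n + 1) ∩ Iic (q ^ (n + 1) - q ^ ((n + 1) / 2))) := by
  ext s
  constructor
  · rintro ⟨hs, hsc⟩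
    obtain ⟨y, rfl⟩ := dvd_of_mem_gst_of_le_cGS hs hsc
    rw [mem_Iic, cGS_add_two] at hsc
    exact ⟨y, ⟨(mul_mem_gst_succ_iff hq _ y).mp hs, Nat.le_of_mul_le_mul_left hsc hq⟩, rfl⟩
  · rintro ⟨y, ⟨hy, hyd⟩, rfl⟩
    rw [mem_Iic] at hyd
    exact ⟨(mul_mem_gst_succ_iff hq _ y).mpr hy, cGS_add_two q n ▸ Nat.mul_le_mul_left q hyd⟩

theorem ncard_gst_inter_Iic_cGS (hq : 0 < q) : ∀ n, (GST q n ∩ Iic (cGS q n)).ncard = q ^ (n / 2)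
  | 0 | 1 => by simp [GST, cGS]
  | n + 2 => by
    rw [gst_inter_Iic_cGS_add_two hq, ncard_image_of_injective _ (mul_right_injective₀ hq.ne'),
      ncard_inter_Iic_eq_add (fun _ => mem_gst_of_cGS_le q) (cGS_succ_le hq n),
      ncard_gst_inter_Iic_cGS hq (n + 1), cGS_eq, show (n + 1 + 1) / 2 = (n + 2) / 2 by omega]
    have h₁ : q ^ ((n + 1) / 2) ≤ q ^ ((n + 2) / 2) := Nat.pow_le_pow_right hq (by omega)
    have h₂ : q ^ ((n + 2) / 2) ≤ q ^ (n + 1) := Nat.pow_le_pow_right hq (by omega)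
    omega

theorem ncard_ap_gst_one (hq : 1 < q) (n : ℕ) : (Ap (GST q n) 1).ncard = q ^ (n / 2) := by
  rw [ap_gst_one hq, ncard_gst_inter_Iic_cGS (by omega)]

theorem ncard_ap_gst_pow (hq : 1 < q) {n i : ℕ} (hi : i ≤ n) :
    (Ap (GST q n) (q ^ i)).ncard = q ^ ((n - i) / 2) + (q ^ i - 1) := by
  rw [ncard_ap_eq_ncard_ap_one_add (pow_pos (by omega) i) (fun _ => mem_gst_of_cGS_le q)
    (fun _ hs => add_pow_mem_gst q hs) (pow_mul_mem_gst_iff (by omega) hi), ncard_ap_gst_one hq]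

end GarciaStichtenoth

theorem stmt13_general (q : ℕ) (hq : 2 ≤ q) (n : ℕ) :
    (Ap (GST q n) (q ^ (n - 1))).ncard = q ^ (n - 1)
    ∧ (Ap (GST q n) 1).ncard = q ^ (n / 2)
    ∧ (∀ m, n = 2 * m → ∀ i, 1 ≤ i → i ≤ n - 2 →
        (Ap (GST q n) (q ^ i)).ncard = (q ^ (m - (i + 1) / 2) - 1) + q ^ i)
    ∧ (∀ m, n = 2 * m + 1 → ∀ i, 1 ≤ i → i ≤ n - 2 →
        (Ap (GST q n) (q ^ i)).ncard = (q ^ (m - i / 2) - 1) + q ^ i) := by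
  have hpos : ∀ k, 0 < q ^ k := fun k => pow_pos (by omega) k
  refine ⟨?_, ncard_ap_gst_one hq n, ?_, ?_⟩
  · rw [ncard_ap_gst_pow hq (Nat.sub_le n 1), show (n - (n - 1)) / 2 = 0 by omega, pow_zero]
    have := hpos (n - 1)
    omega
  · rintro m rfl i - hi
    rw [ncard_ap_gst_pow hq (by omega), show (2 * m - i) / 2 = m - (i + 1) / 2 by omega]
    have := hpos (m - (i + 1) / 2)
    have := hpos i
    omega
  · rintro m rfl i - hi
    rw [ncard_ap_gst_pow hq (by omega), show (2 * m + 1 - i) / 2 = m - i / 2 by omega]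
    have := hpos (m - i / 2)
    have := hpos i
    omega

/-- Here `⌊m - i/2⌋ = m - (i+1)/2` and `⌈m - i/2⌉ = m - i/2` in natural division. -/
theorem stmt13 (q : ℕ) (hq : 2 ≤ q) (n : ℕ) (hn : 2 ≤ n) :
    (Ap (GST q n) (q ^ (n - 1))).ncard = q ^ (n - 1)
    ∧ (Ap (GST q n) 1).ncard = q ^ (n / 2)
    ∧ (∀ m, n = 2 * m → ∀ i, 1 ≤ i → i ≤ n - 2 →
        (Ap (GST q n) (q ^ i)).ncard = (q ^ (m - (i + 1) / 2) - 1) + q ^ i)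
    ∧ (∀ m, n = 2 * m + 1 → ∀ i, 1 ≤ i → i ≤ n - 2 →
        (Ap (GST q n) (q ^ i)).ncard = (q ^ (m - i / 2) - 1) + q ^ i) :=
  stmt13_general q hq n
end
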